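/- arXiv:math/0203003 — 7 statements merged into one kernel-verified Lean document; each statement's English description precedes it below -/
import Mathlib

section
/- Let E be a finite-dimensional complex normed space (e.g. E = ℂⁿ). Let g = (g_r)_{r≥0} be a formal multilinear power series from E to E (each g_r a continuous r-multilinear map Eʳ → E) with zero constant coefficient g₀ = 0 and with positive radius of convergence (so g is the Taylor series at 0 of an analytic map G defined near 0 with G(0) = 0). Let p ∈ ℂ with |p| > 1, and let f = Σ_{k≥1} f_k zᵏ be a one-variable formal power series with coefficients f_k ∈ E and zero constant term which is a formal solution of the difference equation f(pz) = G(f(z)); that is, for every k ≥ 1, pᵏ·f_k equals the k-th coefficient of the formal composition g ∘ f. Then f has positive radius of convergence, i.e. f converges to an analytic function in some neighborhood of zero. -/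
/-!
For `k ≥ 1` the `k`-th coefficient of `g ∘ f` is `g₁ f_k` plus terms indexed by compositions
of `k` with at least two blocks, which involve only `f_j` for `j < k`. Since
`‖p‖ᵏ - ‖g₁‖ ≥ 1` for large `k`, the relation `pᵏ f_k = (g ∘ f)_k` bounds `‖f_k‖` by these
nonlinear terms alone. With `‖g_n‖ ≤ C rⁿ`, the weighted partial sums
`S_n = ∑_{1 ≤ k < n} aᵏ ‖f_k‖` then obey `S_{n+1} ≤ a Q + 2 C (r S_n)²` (`Q` accounting for the
finitely many initial coefficients), and for small `a > 0` induction gives `S_n ≤ (Q + 1) a`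
for all `n`: the majorant argument Mathlib uses for the analyticity of inverse series.
-/

open Finset Filter Topology

section Majorant

variable {b : ℕ → ℝ} {C r a : ℝ}

theorem sum_Ico_two_pow_le_two_mul_sq {x : ℝ} (hx : 0 ≤ x) (hx2 : x ≤ 1 / 2) (n : ℕ) :
    ∑ j ∈ Ico 2 n, x ^ j ≤ 2 * x ^ 2 :=
  calc ∑ j ∈ Ico 2 n, x ^ j ≤ x ^ 2 / (1 - x) := geom_sum_Ico_le_of_lt_one hx (by linarith)
    _ ≤ x ^ 2 / (1 / 2) := by gcongr; linarith
    _ = 2 * x ^ 2 := by ring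

theorem sum_Ico_pow_mul_le_mul_sum (hb : ∀ k, 0 ≤ b k) (ha : 0 ≤ a) (ha1 : a ≤ 1) (m : ℕ) :
    ∑ k ∈ Ico 1 m, a ^ k * b k ≤ a * ∑ k ∈ Ico 1 m, b k := by
  rw [mul_sum]
  gcongr with k hk
  · exact hb k
  · exact pow_le_of_le_one ha ha1 (by grind)

theorem sum_Ico_pow_mul_le_of_le_compositions (hb : ∀ k, 0 ≤ b k) (hC : 0 ≤ C) (hr : 0 ≤ r)
    (ha : 0 ≤ a) {k₀ : ℕ} (hk₀ : 2 ≤ k₀)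
    (h : ∀ k, k₀ ≤ k → b k ≤ C * ∑ c ∈ {c : Composition k | 1 < c.length}.toFinset,
      r ^ c.length * ∏ j, b (c.blocksFun j)) (n : ℕ) :
    ∑ k ∈ Ico k₀ (n + 1), a ^ k * b k ≤
      C * ∑ j ∈ Ico 2 (n + 1), (r * ∑ k ∈ Ico 1 n, a ^ k * b k) ^ j := by
  have hterm_nonneg : ∀ k, 0 ≤ a ^ k * ∑ c ∈ {c : Composition k | 1 < c.length}.toFinset,
      r ^ c.length * ∏ j, b (c.blocksFun j) := fun k =>
    mul_nonneg (pow_nonneg ha k) <| sum_nonneg fun c _ =>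
      mul_nonneg (pow_nonneg hr _) (prod_nonneg fun j _ => hb _)
  calc ∑ k ∈ Ico k₀ (n + 1), a ^ k * b k
      ≤ ∑ k ∈ Ico k₀ (n + 1), C * (a ^ k * ∑ c ∈ {c : Composition k | 1 < c.length}.toFinset,
          r ^ c.length * ∏ j, b (c.blocksFun j)) := by
        refine sum_le_sum fun k hk => ?_
        rw [mul_left_comm]
        exact mul_le_mul_of_nonneg_left (h k (mem_Ico.1 hk).1) (pow_nonneg ha k)
    _ ≤ C * ∑ k ∈ Ico 2 (n + 1), a ^ k * ∑ c ∈ {c : Composition k | 1 < c.length}.toFinset,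
          r ^ c.length * ∏ j, b (c.blocksFun j) := by
        rw [← mul_sum]
        refine mul_le_mul_of_nonneg_left ?_ hC
        exact sum_le_sum_of_subset_of_nonneg (Ico_subset_Ico hk₀ le_rfl)
          fun k _ _ => hterm_nonneg k
    _ ≤ C * ∑ j ∈ Ico 2 (n + 1), (r * ∑ k ∈ Ico 1 n, a ^ k * b k) ^ j := by
        simp_rw [mul_pow]
        exact mul_le_mul_of_nonneg_left
          (FormalMultilinearSeries.radius_right_inv_pos_of_radius_pos_aux1 n b hb hr ha) hC

theorem exists_pos_forall_mul_pow_le_of_le_compositions (hb : ∀ k, 0 ≤ b k) (hC : 0 ≤ C)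
    (hr : 0 ≤ r)
    (h : ∀ᶠ k in atTop, b k ≤ C * ∑ c ∈ {c : Composition k | 1 < c.length}.toFinset,
      r ^ c.length * ∏ j, b (c.blocksFun j)) :
    ∃ a > 0, ∃ M, ∀ n, b n * a ^ n ≤ M := by
  obtain ⟨k₀, hk₀⟩ := eventually_atTop.1 (h.and (eventually_ge_atTop 2))
  set K := ∑ k ∈ Ico 1 k₀, b k + 1
  have hK : 0 < K := by have := sum_nonneg fun k (_ : k ∈ Ico 1 k₀) => hb k; positivity
  obtain ⟨a, ⟨ha1, hrKa, hCa⟩, ha⟩ : ∃ a : ℝ,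
      (a < 1 ∧ r * K * a < 1 / 2 ∧ 2 * C * r ^ 2 * K ^ 2 * a < 1) ∧ 0 < a := by
    have hsmall : ∀ c u : ℝ, 0 < u → ∀ᶠ a in 𝓝[>] (0 : ℝ), c * a < u := fun c u hu =>
      nhdsWithin_le_nhds <|
        ((continuous_const_mul c).tendsto' 0 0 (mul_zero c)).eventually_lt_const hu
    have hlt_one : ∀ᶠ a in 𝓝[>] (0 : ℝ), a < 1 :=
      nhdsWithin_le_nhds (eventually_lt_nhds one_pos)
    exact ((hlt_one.and ((hsmall _ _ one_half_pos).and (hsmall _ _ one_pos))).and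
      self_mem_nhdsWithin).exists
  set S : ℕ → ℝ := fun n => ∑ k ∈ Ico 1 n, a ^ k * b k
  have hS_nonneg : ∀ n, 0 ≤ S n := fun n =>
    sum_nonneg fun k _ => mul_nonneg (pow_nonneg ha.le k) (hb k)
  have hS : ∀ n, S n ≤ K * a := by
    intro n
    induction n with
    | zero => simpa [S] using mul_pos hK ha |>.le
    | succ n ih =>
      have hrS : r * S n ≤ r * (K * a) := mul_le_mul_of_nonneg_left ih hr
      have hsplit : S (n + 1) ≤
          ∑ k ∈ Ico 1 k₀, a ^ k * b k + ∑ k ∈ Ico k₀ (n + 1), a ^ k * b k := by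
        rw [← sum_union (Ico_disjoint_Ico_consecutive 1 k₀ (n + 1))]
        exact sum_le_sum_of_subset_of_nonneg (fun k => by simp only [mem_union, mem_Ico]; omega)
          fun k _ _ => mul_nonneg (pow_nonneg ha.le k) (hb k)
      calc S (n + 1)
          ≤ a * (K - 1) + C * ∑ j ∈ Ico 2 (n + 1), (r * S n) ^ j := by
            refine hsplit.trans (add_le_add ?_ ?_)
            · simpa [K] using sum_Ico_pow_mul_le_mul_sum hb ha.le ha1.le k₀
            · exact sum_Ico_pow_mul_le_of_le_compositions hb hC hr ha.le (hk₀ k₀ le_rfl).2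
                (fun k hk => (hk₀ k hk).1) n
        _ ≤ a * (K - 1) + C * (2 * (r * S n) ^ 2) := by
            gcongr
            exact sum_Ico_two_pow_le_two_mul_sq (mul_nonneg hr (hS_nonneg n))
              (by linarith) _
        _ ≤ a * (K - 1) + C * (2 * (r * (K * a)) ^ 2) := by
            gcongr
            exact mul_nonneg hr (hS_nonneg n)
        _ ≤ K * a := by nlinarith
  refine ⟨a, ha, max (b 0) (K * a), fun n => ?_⟩
  rcases n with _ | n
  · simp
  · calc b (n + 1) * a ^ (n + 1) ≤ S (n + 2) :=
          mul_comm (b _) _ ▸ single_le_sum (f := fun k => a ^ k * b k)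
            (fun k _ => mul_nonneg (pow_nonneg ha.le k) (hb k)) (by simp)
      _ ≤ max (b 0) (K * a) := (hS _).trans (le_max_right _ _)

end Majorant

namespace FormalMultilinearSeries

variable {𝕜 E F G : Type*} [NontriviallyNormedField 𝕜]
  [NormedAddCommGroup E] [NormedSpace 𝕜 E] [NormedAddCommGroup F] [NormedSpace 𝕜 F]
  [NormedAddCommGroup G] [NormedSpace 𝕜 G]

theorem norm_comp_le_norm_one_mul_add (g : FormalMultilinearSeries 𝕜 F G)
    (f : FormalMultilinearSeries 𝕜 E F) {k : ℕ} (hk : 0 < k) :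
    ‖(g.comp f) k‖ ≤ ‖g 1‖ * ‖f k‖ +
      ∑ c ∈ {c : Composition k | 1 < c.length}.toFinset,
        ‖g c.length‖ * ∏ j, ‖f (c.blocksFun j)‖ := by
  have hsplit : (univ : Finset (Composition k)) =
      insert (Composition.single k hk) {c : Composition k | 1 < c.length}.toFinset := by
    ext c
    simp only [mem_univ, mem_insert, Set.mem_toFinset, Set.mem_ofPred_eq, true_iff,
      Composition.eq_single_iff_length]
    have := c.length_pos_of_pos hk
    omega
  have hsingle : ‖g.compAlongComposition f (Composition.single k hk)‖ ≤ ‖g 1‖ * ‖f k‖ := by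
    refine (g.compAlongComposition_norm f _).trans_eq ?_
    rw [prod_congr rfl fun j _ => congrArg (‖f ·‖) (Composition.single_blocksFun hk j),
      prod_const, card_univ, Fintype.card_fin, Composition.single_length, pow_one]
  calc ‖(g.comp f) k‖ ≤ ∑ c : Composition k, ‖g.compAlongComposition f c‖ := norm_sum_le _ _
    _ ≤ _ := by
      rw [hsplit, sum_insert (by simp)]
      gcongr with c
      exact g.compAlongComposition_norm f c

theorem eventually_norm_le_of_smul_coeff_eq_comp_coeff {g : FormalMultilinearSeries 𝕜 E E}
    {f : FormalMultilinearSeries 𝕜 𝕜 E} {p : 𝕜} (hp : 1 < ‖p‖)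
    (hfeq : ∀ k, 1 ≤ k → p ^ k • f.coeff k = (g.comp f).coeff k) :
    ∀ᶠ k in atTop, ‖f k‖ ≤ ∑ c ∈ {c : Composition k | 1 < c.length}.toFinset,
      ‖g c.length‖ * ∏ j, ‖f (c.blocksFun j)‖ := by
  filter_upwards [(tendsto_pow_atTop_atTop_of_one_lt hp).eventually_ge_atTop (‖g 1‖ + 1),
    eventually_ge_atTop 1] with k hpk hk
  have hnorm : ‖p‖ ^ k * ‖f k‖ = ‖(g.comp f) k‖ := by
    rw [norm_apply_eq_norm_coef, norm_apply_eq_norm_coef, ← hfeq k hk, norm_smul, norm_pow]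
  have hcomp := g.norm_comp_le_norm_one_mul_add f hk
  nlinarith [norm_nonneg (f k)]

end FormalMultilinearSeries

theorem formal_solution_of_difference_equation_converges_general
    {E : Type*} [NormedAddCommGroup E] [NormedSpace ℂ E]
    (g : FormalMultilinearSeries ℂ E E) (hgrad : 0 < g.radius)
    (p : ℂ) (hp : 1 < ‖p‖)
    (f : FormalMultilinearSeries ℂ ℂ E)
    (hfeq : ∀ k : ℕ, 1 ≤ k → p ^ k • f.coeff k = (g.comp f).coeff k) :
    0 < f.radius := by
  obtain ⟨C, r, hC, hr, hgCr⟩ := g.le_mul_pow_of_radius_pos hgrad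
  have hf : ∀ᶠ k in atTop, ‖f k‖ ≤ C * ∑ c ∈ {c : Composition k | 1 < c.length}.toFinset,
      r ^ c.length * ∏ j, ‖f (c.blocksFun j)‖ := by
    filter_upwards [FormalMultilinearSeries.eventually_norm_le_of_smul_coeff_eq_comp_coeff hp hfeq]
      with k hk
    rw [mul_sum]
    refine hk.trans (sum_le_sum fun c _ => ?_)
    rw [← mul_assoc]
    exact mul_le_mul_of_nonneg_right (hgCr _) (prod_nonneg fun j _ => norm_nonneg _)
  obtain ⟨a, ha, M, hM⟩ :=
    exists_pos_forall_mul_pow_le_of_le_compositions (fun k => norm_nonneg (f k)) hC.le hr.le hf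
  exact (ENNReal.coe_pos.2 ha).trans_le (f.le_radius_of_bound M (r := ⟨a, ha.le⟩) hM)

/-- key analytic lemma of the appendix.
Let `E` be a finite-dimensional complex normed space, `g` a formal multilinear
power series from `E` to `E` with zero constant coefficient and positive radius
of convergence, and `p ∈ ℂ` with `|p| > 1`.  If `f = Σ_{k≥1} f_k zᵏ` is a
one-variable formal power series with values in `E`, zero constant term, which
formally solves `f(pz) = G(f(z))` (i.e. `pᵏ • f_k` is the `k`-th coefficient of
the formal composition `g ∘ f` for all `k ≥ 1`), then `f` has positive radius
of convergence. -/
theorem formal_solution_of_difference_equation_converges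
    {E : Type*} [NormedAddCommGroup E] [NormedSpace ℂ E] [FiniteDimensional ℂ E]
    (g : FormalMultilinearSeries ℂ E E) (hg0 : g 0 = 0) (hgrad : 0 < g.radius)
    (p : ℂ) (hp : 1 < ‖p‖)
    (f : FormalMultilinearSeries ℂ ℂ E) (hf0 : f 0 = 0)
    (hfeq : ∀ k : ℕ, 1 ≤ k → p ^ k • f.coeff k = (g.comp f).coeff k) :
    0 < f.radius :=
  formal_solution_of_difference_equation_converges_general g hgrad p hp f hfeq
end

section
/- Let E be a finite-dimensional complex normed space, p ∈ ℂ with |p| > 1, and A > 0. For each integer r ≥ 1 let g_r : Eʳ → E be a continuous r-multilinear map with operator norm ‖g_r‖ ≤ Aʳ. Suppose (f_k)_{k≥1} is a sequence in E such that for every k ≥ 1 the recursion (pᵏ·id_E − g₁)(f_k) = Σ_{r=2}^{k} Σ_{(i₁,…,i_r)} g_r(f_{i₁}, …, f_{i_r}) holds, where the inner sum ranges over all r-tuples (i₁,…,i_r) of positive integers with i₁ + ⋯ + i_r = k. Then there exist constants C > 0 and B ≥ 1 such that ‖f_k‖ ≤ C·B^{k−1} for all k ≥ 1; in particular the power series Σ_{k≥1}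 f_k zᵏ has positive radius of convergence. -/
/-- The one-variable power series `Σ_{k ≥ 1} f_k zᵏ` with coefficients `f_k ∈ E`,
viewed as a formal multilinear series from `ℂ` to `E`. -/
noncomputable def coeffSeries {E : Type*} [NormedAddCommGroup E] [NormedSpace ℂ E]
    (f : ℕ → E) : FormalMultilinearSeries ℂ ℂ E :=
  fun k => if k = 0 then 0 else ContinuousMultilinearMap.mkPiRing ℂ (Fin k) (f k)

/-!
Induct on `k` with the bound `‖f_j‖ ≤ C B^(j-1)` and `x := A C / B`. A composition of `k` into
`r` blocks contributes at most `A^r C^r B^(k-r) = B^k x^r` to the right-hand side, and since a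
composition is determined by its set of boundaries, `x * ∑_c x^(length c) ≤ (1 + x)^(k+1)`.
The left-hand side is at least `(‖p‖^k - A) ‖f_k‖`, so the induction closes as soon as
`A (1 + x)^(k+1) ≤ x² (‖p‖^k - A)`. Choosing `1 + x < ‖p‖`, this holds for all `k ≥ k₀`, and
the finitely many `f_k` with `k < k₀` are absorbed into `C`, which also fixes `B = A C / x`.
-/

open Finset Filter Asymptotics
open scoped NNReal

theorem Composition.boundaries_injective (n : ℕ) :
    Function.Injective (Composition.boundaries : Composition n → Finset (Fin (n + 1))) :=
  Function.Injective.comp (g := CompositionAsSet.boundaries) (fun _ _ => CompositionAsSet.ext)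
    (compositionEquiv n).injective

theorem Composition.sum_pow_length_succ_le (n : ℕ) {x : ℝ} (hx : 0 ≤ x) :
    ∑ c : Composition n, x ^ (c.length + 1) ≤ (1 + x) ^ (n + 1) := by
  let boundaries : Composition n ↪ Finset (Fin (n + 1)) := ⟨_, boundaries_injective n⟩
  calc ∑ c : Composition n, x ^ (c.length + 1)
      = ∑ s ∈ univ.map boundaries, x ^ s.card := by
        simp [boundaries, Composition.card_boundaries_eq_succ_length]
    _ ≤ ∑ s : Finset (Fin (n + 1)), x ^ s.card :=
        sum_le_sum_of_subset_of_nonneg (subset_univ _) fun _ _ _ => by positivity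
    _ = (1 + x) ^ (n + 1) := by
        simpa [add_comm] using Fintype.sum_pow_mul_eq_add_pow (Fin (n + 1)) x 1

theorem Composition.sum_blocksFun_sub_one {n : ℕ} (c : Composition n) :
    ∑ i, (c.blocksFun i - 1) = n - c.length := by
  rw [sum_tsub_distrib _ fun i _ => c.one_le_blocksFun i, c.sum_blocksFun]
  simp

theorem Composition.prod_le_mul_pow {n : ℕ} (c : Composition n) {u : ℕ → ℝ} {C B : ℝ}
    (hu : ∀ j, 0 ≤ u j) (hbound : ∀ i, u (c.blocksFun i) ≤ C * B ^ (c.blocksFun i - 1)) :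
    ∏ i, u (c.blocksFun i) ≤ C ^ c.length * B ^ (n - c.length) := by
  calc ∏ i, u (c.blocksFun i) ≤ ∏ i, C * B ^ (c.blocksFun i - 1) :=
        prod_le_prod (fun i _ => hu _) fun i _ => hbound i
    _ = C ^ c.length * B ^ (n - c.length) := by
        rw [prod_mul_distrib, prod_pow_eq_pow_sum, c.sum_blocksFun_sub_one]
        simp

theorem Composition.blocksFun_lt_of_two_le_length {n : ℕ} {c : Composition n}
    (hc : 2 ≤ c.length) (i : Fin c.length) : c.blocksFun i < n := by
  have hn : 0 < n := by have := c.length_le; omega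
  exact (Composition.ne_single_iff hn).1 (fun h => by
    rw [Composition.eq_single_iff_length] at h; omega) i

theorem eventually_mul_pow_add_le_mul_pow {t a : ℝ} (ht : 0 ≤ t) (hta : t < a) (ha : 1 < a)
    (α β : ℝ) {γ : ℝ} (hγ : 0 < γ) : ∀ᶠ k in atTop, α * t ^ k + β ≤ γ * a ^ k := by
  have h : (fun k : ℕ => α * t ^ k + β * 1 ^ k) =o[atTop] fun k => a ^ k :=
    ((isLittleO_pow_pow_of_lt_left ht hta).const_mul_left α).add
      ((isLittleO_pow_pow_of_lt_left zero_le_one ha).const_mul_left β)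
  filter_upwards [h.bound hγ] with k hk
  simpa [abs_of_pos (zero_lt_one.trans ha)] using (le_abs_self _).trans hk

theorem le_mul_pow_of_le_sum_compositions {a A x B C : ℝ} {u : ℕ → ℝ} {k : ℕ}
    (hA : 0 < A) (hx : 0 < x) (hB : 0 ≤ B) (hAC : A * C = x * B) (hu : ∀ j, 0 ≤ u j)
    (hk : A * (1 + x) ^ (k + 1) ≤ x ^ 2 * (a ^ k - A)) (hk₁ : 1 ≤ k)
    (hrec : (a ^ k - A) * u k ≤ ∑ c : Composition k with 2 ≤ c.length,
      A ^ c.length * ∏ i, u (c.blocksFun i))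
    (ih : ∀ j < k, 1 ≤ j → u j ≤ C * B ^ (j - 1)) :
    u k ≤ C * B ^ (k - 1) := by
  have hterm : ∀ c : Composition k, 2 ≤ c.length →
      A ^ c.length * ∏ i, u (c.blocksFun i) ≤ B ^ k * x ^ c.length := fun c hc =>
    calc A ^ c.length * ∏ i, u (c.blocksFun i)
        ≤ A ^ c.length * (C ^ c.length * B ^ (k - c.length)) := by
          gcongr
          exact c.prod_le_mul_pow hu fun i =>
            ih _ (c.blocksFun_lt_of_two_le_length hc i) (c.one_le_blocksFun i)
      _ = B ^ k * x ^ c.length := by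
          rw [← mul_assoc, ← mul_pow, hAC, mul_pow, mul_assoc, ← pow_add,
            Nat.add_sub_cancel' c.length_le, mul_comm]
  have hsum : ∑ c : Composition k with 2 ≤ c.length, A ^ c.length * ∏ i, u (c.blocksFun i)
      ≤ B ^ k * ∑ c : Composition k, x ^ c.length := by
    rw [mul_sum]
    exact (sum_le_sum fun c hc => hterm c (mem_filter.1 hc).2).trans
      (sum_le_sum_of_subset_of_nonneg (filter_subset _ _) fun _ _ _ => by positivity)
  have key : A * (1 + x) ^ (k + 1) * u k ≤ A * (1 + x) ^ (k + 1) * (C * B ^ (k - 1)) :=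
    calc A * (1 + x) ^ (k + 1) * u k ≤ x ^ 2 * ((a ^ k - A) * u k) := by
          rw [← mul_assoc]; exact mul_le_mul_of_nonneg_right hk (hu k)
      _ ≤ x ^ 2 * (B ^ k * ∑ c : Composition k, x ^ c.length) :=
          mul_le_mul_of_nonneg_left (hrec.trans hsum) (by positivity)
      _ = x * B ^ k * ∑ c : Composition k, x ^ (c.length + 1) := by
          simp only [pow_succ, ← sum_mul]; ring
      _ ≤ x * B ^ k * (1 + x) ^ (k + 1) := by
          gcongr; exact Composition.sum_pow_length_succ_le k hx.le
      _ = A * (1 + x) ^ (k + 1) * (C * B ^ (k - 1)) := by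
          obtain ⟨m, rfl⟩ := Nat.exists_eq_add_of_le' hk₁
          rw [Nat.add_sub_cancel]
          linear_combination (-(1 + x) ^ (m + 1 + 1) * B ^ m) * hAC
  exact le_of_mul_le_mul_left key (by positivity)

theorem exists_geometric_bound_of_le_sum_compositions {a A : ℝ} (ha : 1 < a) (hA : 0 < A)
    {u : ℕ → ℝ} (hu : ∀ j, 0 ≤ u j)
    (hrec : ∀ k, 1 ≤ k → (a ^ k - A) * u k ≤ ∑ c : Composition k with 2 ≤ c.length,
      A ^ c.length * ∏ i, u (c.blocksFun i)) :
    ∃ C > 0, ∃ B ≥ 1, ∀ k, 1 ≤ k → u k ≤ C * B ^ (k - 1) := by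
  obtain ⟨x, hx, hxa⟩ : ∃ x : ℝ, 0 < x ∧ 1 + x < a := ⟨(a - 1) / 2, by linarith, by linarith⟩
  obtain ⟨k₀, hk₀⟩ := eventually_atTop.1 <|
    eventually_mul_pow_add_le_mul_pow (t := 1 + x) (by positivity) (by linarith) ha
      (A * (1 + x)) (A * x ^ 2) (pow_pos hx 2)
  set C := x / A + ∑ j ∈ range k₀, u j
  have hxC : x / A ≤ C := le_add_of_nonneg_right (sum_nonneg fun j _ => hu j)
  have hC : 0 < C := (div_pos hx hA).trans_le hxC
  have hB : 1 ≤ A * C / x := by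
    rw [one_le_div hx, mul_comm]
    exact (div_le_iff₀ hA).1 hxC
  refine ⟨C, hC, A * C / x, hB, fun k => ?_⟩
  induction k using Nat.strong_induction_on with
  | _ k ih =>
    intro hk₁
    rcases lt_or_ge k k₀ with hsmall | hlarge
    · calc u k ≤ ∑ j ∈ range k₀, u j := single_le_sum (fun j _ => hu j) (mem_range.2 hsmall)
        _ ≤ C := le_add_of_nonneg_left (div_pos hx hA).le
        _ ≤ C * (A * C / x) ^ (k - 1) := le_mul_of_one_le_right hC.le (one_le_pow₀ hB)
    · refine le_mul_pow_of_le_sum_compositions hA hx (by positivity) (by field_simp) hu ?_ hk₁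
        (hrec k hk₁) ih
      linear_combination hk₀ k hlarge

theorem norm_le_sum_compositions_of_recursion {E : Type*} [NormedAddCommGroup E]
    [NormedSpace ℂ E] {p : ℂ} {A : ℝ}
    {g : (r : ℕ) → ContinuousMultilinearMap ℂ (fun _ : Fin r => E) E}
    (hg : ∀ r : ℕ, 1 ≤ r → ‖g r‖ ≤ A ^ r) {f : ℕ → E} {k : ℕ}
    (hrec : p ^ k • f k - g 1 (fun _ => f k) =
      ∑ c : Composition k with 2 ≤ c.length, g c.length (fun j => f (c.blocksFun j))) :
    (‖p‖ ^ k - A) * ‖f k‖ ≤ ∑ c : Composition k with 2 ≤ c.length,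
      A ^ c.length * ∏ i, ‖f (c.blocksFun i)‖ := by
  have hg₁ : ‖g 1 (fun _ => f k)‖ ≤ A * ‖f k‖ := by
    simpa using ((g 1).le_opNorm _).trans
      (mul_le_mul_of_nonneg_right (hg 1 le_rfl) (by positivity))
  calc (‖p‖ ^ k - A) * ‖f k‖ ≤ ‖p ^ k • f k‖ - ‖g 1 (fun _ => f k)‖ := by
        rw [norm_smul, norm_pow]; linarith
    _ ≤ ‖p ^ k • f k - g 1 (fun _ => f k)‖ := norm_sub_norm_le _ _
    _ ≤ ∑ c : Composition k with 2 ≤ c.length, ‖g c.length (fun j => f (c.blocksFun j))‖ := by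
        rw [hrec]; exact norm_sum_le _ _
    _ ≤ _ := sum_le_sum fun c hc => ((g _).le_opNorm _).trans <|
        mul_le_mul_of_nonneg_right (hg _ (by have := (mem_filter.1 hc).2; omega))
          (prod_nonneg fun _ _ => norm_nonneg _)

theorem coeffSeries_radius_pos {E : Type*} [NormedAddCommGroup E] [NormedSpace ℂ E]
    {f : ℕ → E} {C B : ℝ} (hC : 0 ≤ C) (hB : 0 < B)
    (hf : ∀ k, 1 ≤ k → ‖f k‖ ≤ C * B ^ (k - 1)) : 0 < (coeffSeries f).radius := by
  lift B to ℝ≥0 using hB.le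
  refine lt_of_lt_of_le (ENNReal.coe_pos.2 (inv_pos.2 (by exact_mod_cast hB)))
    ((coeffSeries f).le_radius_of_bound (C * B⁻¹) fun n => ?_)
  rcases n with _ | n
  · simp only [coeffSeries, ↓reduceIte, norm_zero, NNReal.coe_inv, pow_zero, mul_one]
    positivity
  · simp only [coeffSeries, add_eq_zero, one_ne_zero, and_false, if_false,
      ContinuousMultilinearMap.norm_mkPiRing, NNReal.coe_inv]
    calc ‖f (n + 1)‖ * (B : ℝ)⁻¹ ^ (n + 1) ≤ C * B ^ n * (B : ℝ)⁻¹ ^ (n + 1) := by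
          gcongr; exact hf (n + 1) n.succ_pos
      _ = C * (B : ℝ)⁻¹ := by rw [inv_pow, pow_succ]; field_simp

theorem growth_estimate_of_recursion_general
    {E : Type*} [NormedAddCommGroup E] [NormedSpace ℂ E]
    (p : ℂ) (hp : 1 < ‖p‖) (A : ℝ) (hA : 0 < A)
    (g : (r : ℕ) → ContinuousMultilinearMap ℂ (fun _ : Fin r => E) E)
    (hg : ∀ r : ℕ, 1 ≤ r → ‖g r‖ ≤ A ^ r)
    (f : ℕ → E)
    (hrec : ∀ k : ℕ, 1 ≤ k →
      p ^ k • f k - g 1 (fun _ => f k) =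
        ∑ c ∈ Finset.univ.filter (fun c : Composition k => 2 ≤ c.length),
          g c.length (fun j => f (c.blocksFun j))) :
    ∃ C > (0 : ℝ), ∃ B ≥ (1 : ℝ),
      (∀ k : ℕ, 1 ≤ k → ‖f k‖ ≤ C * B ^ (k - 1)) ∧
        0 < (coeffSeries f).radius := by
  obtain ⟨C, hC, B, hB, hf⟩ := exists_geometric_bound_of_le_sum_compositions hp hA
    (fun k => norm_nonneg (f k))
    (fun k hk => norm_le_sum_compositions_of_recursion hg (hrec k hk))
  exact ⟨C, hC, B, hB, hf, coeffSeries_radius_pos hC.le (by linarith) hf⟩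

/-- geometric growth estimate, inductive core of the appendix.
Let `E` be a finite-dimensional complex normed space, `p ∈ ℂ` with `|p| > 1`,
`A > 0`, and for each `r ≥ 1` a continuous `r`-multilinear map `g_r : Eʳ → E`
with `‖g_r‖ ≤ Aʳ`.  If `(f_k)_{k≥1}` satisfies the recursion
`(pᵏ•id − g₁)(f_k) = Σ_{r=2}^{k} Σ_{i₁+⋯+i_r = k, i_j ≥ 1} g_r(f_{i₁},…,f_{i_r})`
(the inner sums being encoded by compositions of `k` of length `r ≥ 2`), then
there are `C > 0` and `B ≥ 1` with `‖f_k‖ ≤ C·B^(k−1)` for all `k ≥ 1`; in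
particular the power series `Σ_{k≥1} f_k zᵏ` has positive radius of
convergence. -/
theorem growth_estimate_of_recursion
    {E : Type*} [NormedAddCommGroup E] [NormedSpace ℂ E] [FiniteDimensional ℂ E]
    (p : ℂ) (hp : 1 < ‖p‖) (A : ℝ) (hA : 0 < A)
    (g : (r : ℕ) → ContinuousMultilinearMap ℂ (fun _ : Fin r => E) E)
    (hg : ∀ r : ℕ, 1 ≤ r → ‖g r‖ ≤ A ^ r)
    (f : ℕ → E)
    (hrec : ∀ k : ℕ, 1 ≤ k →
      p ^ k • f k - g 1 (fun _ => f k) =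
        ∑ c ∈ Finset.univ.filter (fun c : Composition k => 2 ≤ c.length),
          g c.length (fun j => f (c.blocksFun j))) :
    ∃ C > (0 : ℝ), ∃ B ≥ (1 : ℝ),
      (∀ k : ℕ, 1 ≤ k → ‖f k‖ ≤ C * B ^ (k - 1)) ∧
        0 < (coeffSeries f).radius :=
  growth_estimate_of_recursion_general p hp A hA g hg f hrec
end

section
/- Let N ≥ 1 be an integer, r > 0, and p ∈ ℂ with |p| > 1. Let f : D_r → ℂᴺ be holomorphic on the open disk D_r = {z ∈ ℂ : |z| < r}, written in components f = (f₁, …, f_N). For each i ∈ {1,…,N}, let P_i and Q_i be polynomials in N complex variables such that the function z ↦ Q_i(f(z)) is not identically zero on D_r, and assume the difference equation f_i(pz)·Q_i(f(z)) = P_i(f(z)) holds for every z with |z| < r/|p| and every i. Then each component f_i extends to a meromorphic function on all of ℂ: there exist functions F₁, …, F_N meromorphic on ℂ with F_i(z) = f_i(z) for every z ∈ D_r. -/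
/-!
Solving the difference equation for `f i z` gives `f i z = P_i(f(z/p)) / Q_i(f(z/p))`. The right
side is meromorphic on the disk of radius `r‖p‖`, and it agrees with `f i` on the disk of radius `r`
off the zeros of `Q_i(f(z/p))`, which form a set discrete within the larger disk. Iterating
`g ↦ P(g(·/p)) / Q(g(·/p))` gives functions meromorphic on the disks of radius `r‖p‖ⁿ`, consecutive
ones agreeing off such discrete sets. Evaluating at each point the first iterate whose disk
contains it gives a function that, near any point, agrees with a single iterate off that point.
-/

open Filter Metric MvPolynomial Set Topology

variable {𝕜 E : Type*} [NontriviallyNormedField 𝕜] [NormedAddCommGroup E] [NormedSpace 𝕜 E]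

theorem MeromorphicAt.eval_mvPolynomial {σ : Type*} {g : σ → 𝕜 → 𝕜} {x : 𝕜}
    (hg : ∀ j, MeromorphicAt (g j) x) (R : MvPolynomial σ 𝕜) :
    MeromorphicAt (fun z => eval (fun j => g j z) R) x := by
  induction R using MvPolynomial.induction_on with
  | C a => simp only [eval_C]; exact MeromorphicAt.const a x
  | add R S hR hS => simpa only [eval_add] using hR.fun_add hS
  | mul_X R j hR => simpa only [eval_mul, eval_X] using hR.fun_mul (hg j)

theorem eventually_codiscreteWithin_eval_ne_zero {σ : Type*} {f : σ → 𝕜 → 𝕜} {U : Set 𝕜}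
    (hU : IsPreconnected U) (hf : ∀ j, AnalyticOnNhd 𝕜 (f j) U) {Q : MvPolynomial σ 𝕜}
    (hQ : ∃ z ∈ U, eval (fun j => f j z) Q ≠ 0) :
    ∀ᶠ z in codiscreteWithin U, eval (fun j => f j z) Q ≠ 0 := by
  obtain ⟨z₀, hz₀, hQz₀⟩ := hQ
  have hQf : AnalyticOnNhd 𝕜 (fun z => eval (fun j => f j z) Q) U := by
    simpa only [aeval_eq_eval] using
      AnalyticOnNhd.aeval_mvPolynomial (A := 𝕜) (f := fun z j => f j z) hf Q
  exact (hQf.eqOn_zero_or_eventually_ne_zero_of_preconnected hU).resolve_left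
    fun h => hQz₀ (h hz₀)

theorem preimage_div_ball {p : 𝕜} (hp : p ≠ 0) (R : ℝ) :
    (· / p) ⁻¹' ball (0 : 𝕜) R = ball 0 (R * ‖p‖) := by
  ext z
  simp [norm_div, div_lt_iff₀ (norm_pos_iff.2 hp)]

theorem preimage_div_mem_codiscreteWithin {p : 𝕜} (hp : p ≠ 0) {s V : Set 𝕜}
    (hs : s ∈ codiscreteWithin V) : (· / p) ⁻¹' s ∈ codiscreteWithin ((· / p) ⁻¹' V) := by
  let e := Homeomorph.mulRight₀ p⁻¹ (inv_ne_zero hp)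
  have he : ∀ t : Set 𝕜, (· / p) ⁻¹' t = e.symm '' t := fun t => by
    rw [Homeomorph.image_symm]; ext; simp [e, div_eq_mul_inv]
  rw [he, he]
  exact e.symm.isEmbedding.image_mem_codiscreteWithin.2 hs

theorem eventually_nhdsNE_of_codiscreteWithin_of_closure_subset {X : Type*} [TopologicalSpace X]
    {q : X → Prop} {V W : Set X} (hVW : closure V ⊆ W)
    (hq : ∀ᶠ z in codiscreteWithin W, z ∈ V → q z) (x : X) :
    ∀ᶠ z in 𝓝[≠] x, z ∈ V → q z := by
  by_cases hx : x ∈ W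
  · filter_upwards [mem_codiscreteWithin_iff_forall_mem_nhdsNE.1 hq x hx] with z hz hzV
    exact hz.resolve_right (not_not.2 (hVW (subset_closure hzV))) hzV
  · have hV : ∀ᶠ z in 𝓝 x, z ∉ V :=
      Filter.not_frequently.1 (mt mem_closure_iff_frequently.2 fun h => hx (hVW h))
    exact Eventually.filter_mono nhdsWithin_le_nhds (hV.mono fun z hz hzV => absurd hzV hz)

theorem exists_meromorphicOn_univ_of_exhaustion {U : ℕ → Set 𝕜} {g : ℕ → 𝕜 → E}
    (hopen : ∀ n, IsOpen (U n)) (hclosure : ∀ n, closure (U n) ⊆ U (n + 1)) (hcover : ∀ x, ∃ n, x ∈ U n)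
    (hg : ∀ n, MeromorphicOn (g n) (U n))
    (hstep : ∀ n, ∀ᶠ z in codiscreteWithin (U (n + 1)), z ∈ U n → g (n + 1) z = g n z) :
    ∃ F : 𝕜 → E, MeromorphicOn F univ ∧ EqOn F (g 0) (U 0) := by
  classical
  have hmono : Monotone U := monotone_nat_of_le_succ fun n => subset_closure.trans (hclosure n)
  refine ⟨fun z => g (Nat.find (hcover z)) z, fun x _ => ?_,
    fun z hz => by simp only [(Nat.find_eq_zero (hcover z)).2 hz]⟩
  obtain ⟨n₀, hx⟩ := hcover x
  -- `closure (U k) ⊆ U (k + 1)` keeps the exceptional set of step `k` from accumulating at `x`.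
  have hnear : ∀ᶠ z in 𝓝[≠] x, ∀ k ∈ Iio n₀, z ∈ U k → g (k + 1) z = g k z :=
    (eventually_all_finite (finite_Iio n₀)).2 fun k _ =>
      eventually_nhdsNE_of_codiscreteWithin_of_closure_subset (hclosure k) (hstep k) x
  have hin : ∀ᶠ z in 𝓝[≠] x, z ∈ U n₀ := nhdsWithin_le_nhds ((hopen n₀).mem_nhds hx)
  refine (hg n₀ x hx).congr ?_
  filter_upwards [hnear, hin] with z hz hzn₀
  have hchain : ∀ n, Nat.find (hcover z) ≤ n → n ≤ n₀ → g n z = g (Nat.find (hcover z)) z := by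
    intro n hn
    induction n, hn using Nat.le_induction with
    | base => exact fun _ => rfl
    | succ n hn ih => exact fun hn₀ =>
        (hz n hn₀ (hmono hn (Nat.find_spec (hcover z)))).trans (ih (Nat.le_of_succ_le hn₀))
  exact hchain n₀ (Nat.find_le hzn₀) le_rfl

theorem exists_meromorphicOn_univ_of_geometric_exhaustion {g : ℕ → 𝕜 → E} {r a : ℝ}
    (hr : 0 < r) (ha : 1 < a) (hg : ∀ n, MeromorphicOn (g n) (ball 0 (r * a ^ n)))
    (hstep : ∀ n, ∀ᶠ z in codiscreteWithin (ball 0 (r * a ^ (n + 1))),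
      z ∈ ball 0 (r * a ^ n) → g (n + 1) z = g n z) :
    ∃ F : 𝕜 → E, MeromorphicOn F univ ∧ EqOn F (g 0) (ball 0 r) := by
  have hclosure : ∀ n, closure (ball (0 : 𝕜) (r * a ^ n)) ⊆ ball 0 (r * a ^ (n + 1)) := fun n =>
    closure_ball_subset_closedBall.trans <| closedBall_subset_ball <|
      mul_lt_mul_of_pos_left (pow_lt_pow_right₀ ha n.lt_succ_self) hr
  have hcover : ∀ z : 𝕜, ∃ n, z ∈ ball 0 (r * a ^ n) := fun z =>
    (pow_unbounded_of_one_lt (‖z‖ / r) ha).imp fun n hn => by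
      rwa [mem_ball_zero_iff, mul_comm, ← div_lt_iff₀ hr]
  simpa only [pow_zero, mul_one] using exists_meromorphicOn_univ_of_exhaustion (fun _ => isOpen_ball) hclosure hcover hg hstep

section DifferenceEquation

variable {ι : Type*} (p : ℂ) (P Q : ι → MvPolynomial ι ℂ)

noncomputable def continuationStep (g : ι → ℂ → ℂ) (i : ι) (z : ℂ) : ℂ :=
  eval (fun j => g j (z / p)) (P i) / eval (fun j => g j (z / p)) (Q i)

variable {p}

theorem MeromorphicOn.continuationStep {g : ι → ℂ → ℂ} {U : Set ℂ}
    (hg : ∀ j, MeromorphicOn (g j) U) (i : ι) :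
    MeromorphicOn (continuationStep p P Q g i) ((· / p) ⁻¹' U) := fun x hx => by
  have hgp : ∀ j, MeromorphicAt (fun z => g j (z / p)) x := fun j =>
    (hg j _ hx).comp_analyticAt (g := (· / p)) (by fun_prop)
  exact (MeromorphicAt.eval_mvPolynomial hgp (P i)).fun_div
    (MeromorphicAt.eval_mvPolynomial hgp (Q i))

theorem eventually_continuationStep_eq {g g' : ι → ℂ → ℂ} {V W : Set ℂ} (hp : p ≠ 0)
    (h : ∀ᶠ w in codiscreteWithin V, w ∈ W → ∀ j, g' j w = g j w) :
    ∀ᶠ z in codiscreteWithin ((· / p) ⁻¹' V), z ∈ (· / p) ⁻¹' W →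
      ∀ i, continuationStep p P Q g' i z = continuationStep p P Q g i z := by
  filter_upwards [preimage_div_mem_codiscreteWithin hp h] with z hz hzW i
  simp only [continuationStep, hz hzW]

theorem eventually_continuationStep_eq_self [Finite ι] {f : ι → ℂ → ℂ} {r : ℝ} (hp : p ≠ 0)
    (hf : ∀ j, AnalyticOnNhd ℂ (f j) (ball 0 r))
    (hQ : ∀ i, ∃ z ∈ ball (0 : ℂ) r, eval (fun j => f j z) (Q i) ≠ 0)
    (heq : ∀ i, ∀ z : ℂ, ‖z‖ < r / ‖p‖ →
      f i (p * z) * eval (fun j => f j z) (Q i) = eval (fun j => f j z) (P i)) :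
    ∀ᶠ z in codiscreteWithin (ball 0 (r * ‖p‖)), z ∈ ball 0 r →
      ∀ i, continuationStep p P Q f i z = f i z := by
  have hQ_ne : ∀ i, ∀ᶠ z in codiscreteWithin (ball 0 (r * ‖p‖)),
      eval (fun j => f j (z / p)) (Q i) ≠ 0 := fun i => by
    rw [← preimage_div_ball hp]
    exact preimage_div_mem_codiscreteWithin hp
      (eventually_codiscreteWithin_eval_ne_zero isPreconnected_ball hf (hQ i))
  filter_upwards [eventually_all.2 hQ_ne] with z hz hzr i
  have hzp : ‖z / p‖ < r / ‖p‖ := by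
    rw [norm_div]
    exact div_lt_div_of_pos_right (mem_ball_zero_iff.1 hzr) (norm_pos_iff.2 hp)
  have heqz := heq i (z / p) hzp
  rw [mul_div_cancel₀ z hp] at heqz
  rw [continuationStep, ← heqz, mul_div_cancel_right₀ _ (hz i)]

end DifferenceEquation

theorem meromorphic_continuation_of_difference_equation_general
    (N : ℕ) (r : ℝ) (hr : 0 < r) (p : ℂ) (hp : 1 < ‖p‖)
    (f : Fin N → ℂ → ℂ)
    (hf : ∀ i, DifferentiableOn ℂ (f i) (Metric.ball (0 : ℂ) r))
    (P Q : Fin N → MvPolynomial (Fin N) ℂ)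
    (hQ : ∀ i, ∃ z ∈ Metric.ball (0 : ℂ) r,
      MvPolynomial.eval (fun j => f j z) (Q i) ≠ 0)
    (heq : ∀ i, ∀ z : ℂ, ‖z‖ < r / ‖p‖ →
      f i (p * z) * MvPolynomial.eval (fun j => f j z) (Q i)
        = MvPolynomial.eval (fun j => f j z) (P i)) :
    ∃ F : Fin N → ℂ → ℂ, ∀ i,
      MeromorphicOn (F i) (Set.univ : Set ℂ) ∧
        ∀ z ∈ Metric.ball (0 : ℂ) r, F i z = f i z := by
  have hp₀ : p ≠ 0 := norm_pos_iff.1 (one_pos.trans hp)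
  have hfa : ∀ j, AnalyticOnNhd ℂ (f j) (ball 0 r) := fun j => (hf j).analyticOnNhd isOpen_ball
  let g : ℕ → Fin N → ℂ → ℂ := fun n => (continuationStep p P Q)^[n] f
  have hg : ∀ n, g (n + 1) = continuationStep p P Q (g n) := fun n =>
    Function.iterate_succ_apply' _ _ _
  have hg₀ : g 0 = f := rfl
  have hball : ∀ n, (· / p) ⁻¹' ball (0 : ℂ) (r * ‖p‖ ^ n) = ball 0 (r * ‖p‖ ^ (n + 1)) :=
    fun n => by rw [preimage_div_ball hp₀, pow_succ, mul_assoc]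
  have hmero : ∀ n i, MeromorphicOn (g n i) (ball 0 (r * ‖p‖ ^ n)) := by
    intro n
    induction n with
    | zero => simpa [hg₀] using fun i => (hfa i).meromorphicOn
    | succ n ih => rw [hg, ← hball]; exact MeromorphicOn.continuationStep P Q ih
  have hstep : ∀ n, ∀ᶠ z in codiscreteWithin (ball 0 (r * ‖p‖ ^ (n + 1))),
      z ∈ ball 0 (r * ‖p‖ ^ n) → ∀ i, g (n + 1) i z = g n i z := by
    intro n
    induction n with
    | zero => simpa [hg, hg₀] using eventually_continuationStep_eq_self P Q hp₀ hfa hQ heq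
    | succ n ih =>
      have := eventually_continuationStep_eq P Q hp₀ ih
      rw [hball (n + 1), hball n] at this
      simpa only [← hg] using this
  choose F hF using fun i => exists_meromorphicOn_univ_of_geometric_exhaustion hr hp
    (fun n => hmero n i) fun n => (hstep n).mono fun z h hz => h hz i
  exact ⟨F, fun i => ⟨(hF i).1, fun z hz => (hF i).2 hz⟩⟩

/-- meromorphic continuation from the difference equation;
the Kazhdan–Soibelman meromorphicity step.
Let `N ≥ 1`, `r > 0`, `p ∈ ℂ` with `|p| > 1`, and `f = (f₁,…,f_N)` holomorphic
on the disk `D_r`.  Suppose for each `i` we have polynomials `P i, Q i` in `N`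
variables such that `z ↦ Q_i(f(z))` is not identically zero on `D_r` and
`f_i(pz)·Q_i(f(z)) = P_i(f(z))` for all `|z| < r/|p|`.  Then each `f_i` extends
to a function meromorphic on all of `ℂ`. -/
theorem meromorphic_continuation_of_difference_equation
    (N : ℕ) (hN : 1 ≤ N) (r : ℝ) (hr : 0 < r) (p : ℂ) (hp : 1 < ‖p‖)
    (f : Fin N → ℂ → ℂ)
    (hf : ∀ i, DifferentiableOn ℂ (f i) (Metric.ball (0 : ℂ) r))
    (P Q : Fin N → MvPolynomial (Fin N) ℂ)
    (hQ : ∀ i, ∃ z ∈ Metric.ball (0 : ℂ) r,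
      MvPolynomial.eval (fun j => f j z) (Q i) ≠ 0)
    (heq : ∀ i, ∀ z : ℂ, ‖z‖ < r / ‖p‖ →
      f i (p * z) * MvPolynomial.eval (fun j => f j z) (Q i)
        = MvPolynomial.eval (fun j => f j z) (P i)) :
    ∃ F : Fin N → ℂ → ℂ, ∀ i,
      MeromorphicOn (F i) (Set.univ : Set ℂ) ∧
        ∀ z ∈ Metric.ball (0 : ℂ) r, F i z = f i z :=
  meromorphic_continuation_of_difference_equation_general N r hr p hp f hf P Q hQ heq
end

section
/- Let R be a weight-preserving solution of the QDYB equation with spectral parameter and step γ which is of gl_n type, with coefficient functions α_{m,l} and β_{m,l}. Let φ = (φ_{m,l})_{m≠l} be a γ-closed multiplicative 2-form: functions φ_{m,l} : ℂⁿ → ℂˣ with φ_{m,l}(λ)·φ_{l,m}(λ) = 1 and with (d_γφ)_{a,b,c}(λ) = (δ_a φ_{b,c})(λ)·((δ_b φ_{a,c})(λ))⁻¹·(δ_c φ_{a,b})(λ) = 1 for all distinct a, b, c and all λ, where (δ_s f)(λ) = f(λ)·f(λ − γe_s)⁻¹. Define R̃(u, λ) = Σ_m α_{m,m}(u,λ)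 E_{m,m} ⊗ E_{m,m} + Σ_{m≠l} ( φ_{m,l}(λ)·α_{m,l}(u,λ) E_{m,m} ⊗ E_{l,l} + β_{m,l}(u,λ) E_{l,m} ⊗ E_{m,l} ). Then R̃ satisfies the QDYB equation with spectral parameter and step γ. -/
/-- Points of the dynamical parameter space `ℂⁿ` (also used as weights). -/
abbrev Wt (n : ℕ) : Type := Fin n → ℂ

noncomputable section

/-- The weight `ε_m` of the `m`-th standard basis vector of `V = ℂⁿ`. -/
def eps (n : ℕ) (m : Fin n) : Wt n := Pi.single m 1

variable {n : ℕ}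

/-- `X^{12}` acting on the first two factors of a triple tensor product, with a
dynamical shift `λ ↦ λ − sh(c)` governed by the (basis vector of the) third
factor.  Operators on tensor products are realized as matrices indexed by
products of basis-index types. -/
def dop12 {A B C : Type*} [DecidableEq C]
    (X : Wt n → Matrix (A × B) (A × B) ℂ) (sh : C → Wt n) (lam : Wt n) :
    Matrix (A × B × C) (A × B × C) ℂ :=
  fun p q => if p.2.2 = q.2.2 then X (lam - sh p.2.2) (p.1, p.2.1) (q.1, q.2.1) else 0

/-- `X^{13}` with a dynamical shift governed by the second factor. -/
def dop13 {A B C : Type*} [DecidableEq B]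
    (X : Wt n → Matrix (A × C) (A × C) ℂ) (sh : B → Wt n) (lam : Wt n) :
    Matrix (A × B × C) (A × B × C) ℂ :=
  fun p q => if p.2.1 = q.2.1 then X (lam - sh p.2.1) (p.1, p.2.2) (q.1, q.2.2) else 0

/-- `X^{23}` with a dynamical shift governed by the first factor. -/
def dop23 {A B C : Type*} [DecidableEq A]
    (X : Wt n → Matrix (B × C) (B × C) ℂ) (sh : A → Wt n) (lam : Wt n) :
    Matrix (A × B × C) (A × B × C) ℂ :=
  fun p q => if p.1 = q.1 then X (lam - sh p.1) (p.2.1, p.2.2) (q.2.1, q.2.2) else 0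

/-- A matrix indexed by `A × B` (with weight maps `wA`, `wB`) is
weight-preserving if every nonzero entry connects basis vectors of equal
total weight. -/
def IsWeightPres {A B : Type*} (wA : A → Wt n) (wB : B → Wt n)
    (X : Matrix (A × B) (A × B) ℂ) : Prop :=
  ∀ p q, X p q ≠ 0 → wA p.1 + wB p.2 = wA q.1 + wB q.2

/-- The quantum dynamical Yang–Baxter equation with spectral parameter and
step `γ` for `R : ℂ × ℂⁿ → End(V ⊗ V)`, `V = ℂⁿ`:
`R^{12}(u₁−u₂, λ−γh^{(3)}) R^{13}(u₁−u₃, λ) R^{23}(u₂−u₃, λ−γh^{(1)})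
 = R^{23}(u₂−u₃, λ) R^{13}(u₁−u₃, λ−γh^{(2)}) R^{12}(u₁−u₂, λ)`. -/
def QDYB (n : ℕ) (γ : ℂ)
    (R : ℂ → Wt n → Matrix (Fin n × Fin n) (Fin n × Fin n) ℂ) : Prop :=
  ∀ u₁ u₂ u₃ : ℂ, ∀ lam : Wt n,
    dop12 (R (u₁ - u₂)) (fun c : Fin n => γ • eps n c) lam *
        dop13 (R (u₁ - u₃)) (fun _ : Fin n => (0 : Wt n)) lam *
        dop23 (R (u₂ - u₃)) (fun a : Fin n => γ • eps n a) lam =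
      dop23 (R (u₂ - u₃)) (fun _ : Fin n => (0 : Wt n)) lam *
        dop13 (R (u₁ - u₃)) (fun b : Fin n => γ • eps n b) lam *
        dop12 (R (u₁ - u₂)) (fun _ : Fin n => (0 : Wt n)) lam

/-- An L-operator for `R` on the space `W` with basis indexed by `K` and
weight map `w` (a representation of `R` on `W`): a weight-preserving function
`L : ℂ × ℂⁿ → End(V ⊗ W)` satisfying
`R^{12}(u₁−u₂, λ−γh^{(3)}) L^{13}(u₁−u₃, λ) L^{23}(u₂−u₃, λ−γh^{(1)})
 = L^{23}(u₂−u₃, λ) L^{13}(u₁−u₃, λ−γh^{(2)}) R^{12}(u₁−u₂, λ)` on `V ⊗ V ⊗ W`. -/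
def IsLOperator {K : Type*} [Fintype K] [DecidableEq K] (n : ℕ) (γ : ℂ)
    (R : ℂ → Wt n → Matrix (Fin n × Fin n) (Fin n × Fin n) ℂ)
    (w : K → Wt n) (L : ℂ → Wt n → Matrix (Fin n × K) (Fin n × K) ℂ) : Prop :=
  (∀ u lam, IsWeightPres (eps n) w (L u lam)) ∧
    ∀ u₁ u₂ u₃ : ℂ, ∀ lam : Wt n,
      dop12 (R (u₁ - u₂)) (fun c : K => γ • w c) lam *
          dop13 (L (u₁ - u₃)) (fun _ : Fin n => (0 : Wt n)) lam *
          dop23 (L (u₂ - u₃)) (fun a : Fin n => γ • eps n a) lam =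
        dop23 (L (u₂ - u₃)) (fun _ : Fin n => (0 : Wt n)) lam *
          dop13 (L (u₁ - u₃)) (fun b : Fin n => γ • eps n b) lam *
          dop12 (R (u₁ - u₂)) (fun _ : K => (0 : Wt n)) lam

/-- The matrix `Σ_{m,l} α_{m,l} E_{m,m} ⊗ E_{l,l} + Σ_{m≠l} β_{m,l} E_{l,m} ⊗ E_{m,l}`
of an R-matrix of `gl_n` type (`E_{a,b}` are the matrix units of `End(ℂⁿ)`). -/
def glnMat {n : ℕ} (α β : Fin n → Fin n → ℂ) :
    Matrix (Fin n × Fin n) (Fin n × Fin n) ℂ :=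
  fun p q =>
    if p = q then α p.1 p.2
    else if p.1 = q.2 ∧ p.2 = q.1 then β q.1 q.2 else 0

/-- The multiplicative difference operator `(δ_s f)(λ) = f(λ)·f(λ − γe_s)⁻¹`. -/
def mdelta (n : ℕ) (γ : ℂ) (s : Fin n) (f : Wt n → ℂˣ) (lam : Wt n) : ℂˣ :=
  f lam * (f (lam - γ • eps n s))⁻¹

namespace QDYBGauge

variable {n : ℕ}

/-- `φ'`: the 2-form extended by `1` on the diagonal, `ℂ`-valued. -/
def ph (φ : Fin n → Fin n → Wt n → ℂˣ) (a b : Fin n) (μ : Wt n) : ℂ :=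
  if a = b then 1 else (φ a b μ : ℂ)

lemma ph_ne (φ : Fin n → Fin n → Wt n → ℂˣ) (a b : Fin n) (μ : Wt n) :
    ph φ a b μ ≠ 0 := by
  unfold ph; split
  · exact one_ne_zero
  · exact Units.ne_zero _

section

variable (γ : ℂ) (φ : Fin n → Fin n → Wt n → ℂˣ)

/-- skew symmetry for `ph`. -/
lemma ph_skew (hskew : ∀ m l : Fin n, ∀ lam : Wt n, φ m l lam * φ l m lam = 1)
    (a b : Fin n) (μ : Wt n) : ph φ a b μ * ph φ b a μ = 1 := by
  unfold ph
  rcases eq_or_ne a b with rfl | h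
  · simp
  · rw [if_neg h, if_neg (Ne.symm h)]
    have := congrArg (Units.val) (hskew a b μ)
    simpa using this

/-- closedness for `ph`, at all triples. -/
lemma ph_closed (hskew : ∀ m l : Fin n, ∀ lam : Wt n, φ m l lam * φ l m lam = 1)
    (hclosed : ∀ a b c : Fin n, a ≠ b → b ≠ c → a ≠ c → ∀ lam : Wt n,
      mdelta n γ a (φ b c) lam * (mdelta n γ b (φ a c) lam)⁻¹ *
          mdelta n γ c (φ a b) lam = 1)
    (a b c : Fin n) (μ : Wt n) :
    ph φ a b (μ - γ • eps n c) * ph φ a c μ * ph φ b c (μ - γ • eps n a) =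
      ph φ b c μ * ph φ a c (μ - γ • eps n b) * ph φ a b μ := by
  rcases eq_or_ne a b with rfl | hab
  · simp [ph]
  rcases eq_or_ne b c with rfl | hbc
  · simp [ph, hab]
  rcases eq_or_ne a c with rfl | hac
  · have h1 := ph_skew φ hskew a b (μ - γ • eps n a)
    have h2 := ph_skew φ hskew b a μ
    simp only [ph, if_neg hab, if_neg (Ne.symm hab), if_pos rfl, if_true] at h1 h2 ⊢
    linear_combination h1 - h2
  · have h := congrArg (Units.val) (hclosed a b c hab hbc hac μ)
    simp only [mdelta, Units.val_mul, Units.val_inv_eq_inv_val, Units.val_one] at h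
    simp only [ph, if_neg hab, if_neg hbc, if_neg hac]
    have n1 : (φ b c (μ - γ • eps n a) : ℂ) ≠ 0 := Units.ne_zero _
    have n2 : (φ a c μ : ℂ) ≠ 0 := Units.ne_zero _
    have n3 : (φ a b (μ - γ • eps n c) : ℂ) ≠ 0 := Units.ne_zero _
    field_simp at h
    linear_combination -h

/-- The gauge diagonal weight function. -/
def D0 (γ : ℂ) (φ : Fin n → Fin n → Wt n → ℂˣ) (lam : Wt n) (a b c : Fin n) : ℂ :=
  if a ≤ b then
    if b ≤ c then 1
    else if a ≤ c then ph φ c b lam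
    else ph φ c a (lam - γ • eps n b) * ph φ c b lam
  else
    if a ≤ c then ph φ b a (lam - γ • eps n c)
    else if b ≤ c then ph φ b a (lam - γ • eps n c) * ph φ c a lam
    else ph φ b a lam * ph φ c a (lam - γ • eps n b) * ph φ c b lam

variable (hsk : ∀ a b : Fin n, ∀ μ : Wt n, ph φ a b μ * ph φ b a μ = 1)
variable (hpc : ∀ a b c : Fin n, ∀ μ : Wt n,
    ph φ a b (μ - γ • eps n c) * ph φ a c μ * ph φ b c (μ - γ • eps n a) =
      ph φ b c μ * ph φ a c (μ - γ • eps n b) * ph φ a b μ)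

lemma D0_ne (lam : Wt n) (a b c : Fin n) : D0 γ φ lam a b c ≠ 0 := by
  unfold D0
  split_ifs <;>
    first
      | exact one_ne_zero
      | exact ph_ne φ _ _ _
      | exact mul_ne_zero (ph_ne φ _ _ _) (ph_ne φ _ _ _)
      | exact mul_ne_zero (mul_ne_zero (ph_ne φ _ _ _) (ph_ne φ _ _ _)) (ph_ne φ _ _ _)

include hsk hpc in
lemma Ri (lam : Wt n) (a b c : Fin n) :
    D0 γ φ lam b a c = D0 γ φ lam a b c * ph φ a b (lam - γ • eps n c) := by
  rcases eq_or_ne a b with rfl | hab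
  · simp [ph]
  rcases lt_or_gt_of_ne hab with h | h
  · have hab' : a ≤ b := h.le
    have hba : ¬ b ≤ a := not_le.mpr h
    by_cases hbc : b ≤ c
    · have hac : a ≤ c := le_trans hab' hbc
      simp only [D0, hab', hba, hbc, hac, if_true, if_false, one_mul]
    · by_cases hac : a ≤ c
      · simp only [D0, hab', hba, hbc, hac, if_true, if_false]
        ring
      · simp only [D0, hab', hba, hbc, hac, if_true, if_false]
        linear_combination - hpc c a b lam
  · have hba' : b ≤ a := h.le
    have hab2 : ¬ a ≤ b := not_le.mpr h
    by_cases hac : a ≤ c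
    · have hbc : b ≤ c := le_trans hba' hac
      simp only [D0, hba', hab2, hac, hbc, if_true, if_false]
      linear_combination - hsk a b (lam - γ • eps n c)
    · by_cases hbc : b ≤ c
      · simp only [D0, hba', hab2, hac, hbc, if_true, if_false]
        linear_combination - ph φ c a lam * hsk a b (lam - γ • eps n c)
      · simp only [D0, hba', hab2, hac, hbc, if_true, if_false]
        linear_combination ph φ a b (lam - γ • eps n c) * hpc c b a lam -
          (ph φ c b (lam - γ • eps n a) * ph φ c a lam) * hsk a b (lam - γ • eps n c)

include hsk in
lemma Rii (lam : Wt n) (a b c : Fin n) :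
    D0 γ φ lam a c b = D0 γ φ lam a b c * ph φ b c lam := by
  rcases eq_or_ne b c with rfl | hbc
  · simp [ph]
  rcases lt_or_gt_of_ne hbc with h | h
  · have hbc' : b ≤ c := h.le
    have hcb : ¬ c ≤ b := not_le.mpr h
    by_cases hab : a ≤ b
    · have hac : a ≤ c := le_trans hab hbc'
      simp only [D0, hab, hbc', hcb, hac, if_true, if_false, one_mul]
    · by_cases hac : a ≤ c
      · simp only [D0, hab, hbc', hcb, hac, if_true, if_false]
      · simp only [D0, hab, hbc', hcb, hac, if_true, if_false]
        ring
  · have hcb' : c ≤ b := h.le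
    have hbc2 : ¬ b ≤ c := not_le.mpr h
    by_cases hac : a ≤ c
    · have hab : a ≤ b := le_trans hac hcb'
      simp only [D0, hac, hcb', hbc2, hab, if_true, if_false]
      linear_combination - hsk b c lam
    · by_cases hab : a ≤ b
      · simp only [D0, hac, hcb', hbc2, hab, if_true, if_false]
        linear_combination - ph φ c a (lam - γ • eps n b) * hsk b c lam
      · simp only [D0, hac, hcb', hbc2, hab, if_true, if_false]
        linear_combination - (ph φ b a lam * ph φ c a (lam - γ • eps n b)) * hsk b c lam

include hsk hpc in
lemma D0_swap13 (lam : Wt n) (a b c : Fin n) :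
    D0 γ φ lam c b a = D0 γ φ lam a b c * ph φ b c lam *
      ph φ a c (lam - γ • eps n b) * ph φ a b lam := by
  rw [Rii γ φ hsk lam c a b, Ri γ φ hsk hpc lam a c b, Rii γ φ hsk lam a b c]

include hsk in
lemma ph_inv (a b : Fin n) (μ : Wt n) : ph φ b a μ = (ph φ a b μ)⁻¹ :=
  eq_inv_of_mul_eq_one_left (hsk b a μ)

include hsk hpc in
lemma B13 (lam : Wt n) (a b c : Fin n) :
    D0 γ φ lam a b c * ph φ a b (lam - γ • eps n c) =
      D0 γ φ lam c b a * ph φ c b (lam - γ • eps n a) * ph φ c a lam := by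
  rw [D0_swap13 γ φ hsk hpc lam a b c, ph_inv φ hsk b c (lam - γ • eps n a),
    ph_inv φ hsk a c lam]
  have h1 := ph_ne φ b c (lam - γ • eps n a)
  have h2 := ph_ne φ a c lam
  field_simp
  linear_combination (D0 γ φ lam a b c) * hpc a b c lam

include hsk hpc in
lemma B23 (lam : Wt n) (a b c : Fin n) :
    D0 γ φ lam a b c * ph φ a b (lam - γ • eps n c) * ph φ a c lam =
      D0 γ φ lam a c b * ph φ a c (lam - γ • eps n b) * ph φ a b lam *
        ph φ c b (lam - γ • eps n a) := by
  rw [Rii γ φ hsk lam a b c, ph_inv φ hsk b c (lam - γ • eps n a)]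
  have h1 := ph_ne φ b c (lam - γ • eps n a)
  field_simp
  linear_combination (D0 γ φ lam a b c) * hpc a b c lam

include hsk in
lemma B23' (lam : Wt n) (a b c : Fin n) :
    D0 γ φ lam a b c = D0 γ φ lam a c b * ph φ c b lam := by
  rw [Rii γ φ hsk lam a b c]
  linear_combination - (D0 γ φ lam a b c) * hsk b c lam

include hsk hpc in
lemma B13' (lam : Wt n) (a b c : Fin n) :
    D0 γ φ lam a b c * ph φ b c lam =
      D0 γ φ lam c b a * ph φ b a lam * ph φ c a (lam - γ • eps n b) := by
  rw [D0_swap13 γ φ hsk hpc lam a b c, ph_inv φ hsk a b lam,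
    ph_inv φ hsk a c (lam - γ • eps n b)]
  have h1 := ph_ne φ a b lam
  have h2 := ph_ne φ a c (lam - γ • eps n b)
  field_simp

include hsk hpc in
lemma B12' (lam : Wt n) (a b c : Fin n) :
    D0 γ φ lam a b c * ph φ b c lam * ph φ a c (lam - γ • eps n b) =
      D0 γ φ lam b a c * ph φ a c lam * ph φ b c (lam - γ • eps n a) *
        ph φ b a lam := by
  rw [Ri γ φ hsk hpc lam a b c, ph_inv φ hsk a b lam]
  have h1 := ph_ne φ a b lam
  field_simp
  linear_combination - (D0 γ φ lam a b c) * hpc a b c lam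

include hpc in
lemma ED (lam : Wt n) (a b c : Fin n) :
    D0 γ φ lam a b c * ph φ b c lam * ph φ a c (lam - γ • eps n b) *
        ph φ a b lam =
      D0 γ φ lam a b c * ph φ a b (lam - γ • eps n c) * ph φ a c lam *
        ph φ b c (lam - γ • eps n a) := by
  linear_combination - (D0 γ φ lam a b c) * hpc a b c lam

end

section Mat

variable (A B : Fin n → Fin n → Wt n → ℂ)

/-- The gauged `gl_n` matrix as a scalar factor times the original. -/
lemma tilde_entry (φ : Fin n → Fin n → Wt n → ℂˣ) (μ : Wt n)
    (p q : Fin n × Fin n) :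
    glnMat (fun m l => if m = l then A m l μ else (φ m l μ : ℂ) * A m l μ)
      (fun m l => B m l μ) p q =
    (if p = q then ph φ p.1 p.2 μ else 1) *
      glnMat (fun m l => A m l μ) (fun m l => B m l μ) p q := by
  rcases eq_or_ne p q with rfl | h
  · simp only [glnMat, if_pos rfl, ph]
    by_cases hd : p.1 = p.2 <;> simp [hd]
  · simp [glnMat, h]

variable (φ : Fin n → Fin n → Wt n → ℂˣ) (lam : Wt n)

lemma L12 (g : Fin n → Wt n) (Dl Dr : Fin n × Fin n × Fin n → ℂ)
    (hA : ∀ a b c : Fin n, Dr (a, b, c) = Dl (a, b, c) * ph φ a b (lam - g c))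
    (hB : ∀ a b c : Fin n, Dl (a, b, c) = Dr (b, a, c)) :
    Matrix.diagonal Dl *
      dop12 (fun μ => fun p q => (if p = q then ph φ p.1 p.2 μ else 1) *
        glnMat (fun m l => A m l μ) (fun m l => B m l μ) p q) g lam =
    dop12 (fun μ => glnMat (fun m l => A m l μ) (fun m l => B m l μ)) g lam *
      Matrix.diagonal Dr := by
  ext ⟨p1, p2, p3⟩ ⟨q1, q2, q3⟩
  rw [Matrix.diagonal_mul, Matrix.mul_diagonal]
  show Dl (p1, p2, p3) * (if p3 = q3 then _ else 0) =
    (if p3 = q3 then _ else 0) * Dr (q1, q2, q3)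
  by_cases h3 : p3 = q3
  · subst h3
    rw [if_pos rfl, if_pos rfl]
    dsimp only
    rcases eq_or_ne ((p1, p2) : Fin n × Fin n) ((q1, q2) : Fin n × Fin n) with hpq | hpq
    · cases hpq
      rw [if_pos rfl, hA]
      ring
    · rw [if_neg hpq, one_mul]
      show Dl (p1, p2, p3) * glnMat _ _ (p1, p2) (q1, q2) =
        glnMat _ _ (p1, p2) (q1, q2) * Dr (q1, q2, p3)
      simp only [glnMat, if_neg hpq]
      by_cases hsw : (p1, p2).1 = (q1, q2).2 ∧ (p1, p2).2 = (q1, q2).1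
      · obtain ⟨hs1, hs2⟩ := hsw
        simp only at hs1 hs2
        subst hs1; subst hs2
        rw [hB]
        ring
      · rw [if_neg hsw]
        ring
  · rw [if_neg h3, if_neg h3, mul_zero, zero_mul]

lemma L13 (g : Fin n → Wt n) (Dl Dr : Fin n × Fin n × Fin n → ℂ)
    (hA : ∀ a b c : Fin n, Dr (a, b, c) = Dl (a, b, c) * ph φ a c (lam - g b))
    (hB : ∀ a b c : Fin n, Dl (a, b, c) = Dr (c, b, a)) :
    Matrix.diagonal Dl *
      dop13 (fun μ => fun p q => (if p = q then ph φ p.1 p.2 μ else 1) *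
        glnMat (fun m l => A m l μ) (fun m l => B m l μ) p q) g lam =
    dop13 (fun μ => glnMat (fun m l => A m l μ) (fun m l => B m l μ)) g lam *
      Matrix.diagonal Dr := by
  ext ⟨p1, p2, p3⟩ ⟨q1, q2, q3⟩
  rw [Matrix.diagonal_mul, Matrix.mul_diagonal]
  show Dl (p1, p2, p3) * (if p2 = q2 then _ else 0) =
    (if p2 = q2 then _ else 0) * Dr (q1, q2, q3)
  by_cases h2 : p2 = q2
  · subst h2
    rw [if_pos rfl, if_pos rfl]
    dsimp only
    rcases eq_or_ne ((p1, p3) : Fin n × Fin n) ((q1, q3) : Fin n × Fin n) with hpq | hpq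
    · cases hpq
      rw [if_pos rfl, hA]
      ring
    · rw [if_neg hpq, one_mul]
      show Dl (p1, p2, p3) * glnMat _ _ (p1, p3) (q1, q3) =
        glnMat _ _ (p1, p3) (q1, q3) * Dr (q1, p2, q3)
      simp only [glnMat, if_neg hpq]
      by_cases hsw : (p1, p3).1 = (q1, q3).2 ∧ (p1, p3).2 = (q1, q3).1
      · obtain ⟨hs1, hs2⟩ := hsw
        simp only at hs1 hs2
        subst hs1; subst hs2
        rw [hB]
        ring
      · rw [if_neg hsw]
        ring
  · rw [if_neg h2, if_neg h2, mul_zero, zero_mul]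

lemma L23 (g : Fin n → Wt n) (Dl Dr : Fin n × Fin n × Fin n → ℂ)
    (hA : ∀ a b c : Fin n, Dr (a, b, c) = Dl (a, b, c) * ph φ b c (lam - g a))
    (hB : ∀ a b c : Fin n, Dl (a, b, c) = Dr (a, c, b)) :
    Matrix.diagonal Dl *
      dop23 (fun μ => fun p q => (if p = q then ph φ p.1 p.2 μ else 1) *
        glnMat (fun m l => A m l μ) (fun m l => B m l μ) p q) g lam =
    dop23 (fun μ => glnMat (fun m l => A m l μ) (fun m l => B m l μ)) g lam *
      Matrix.diagonal Dr := by
  ext ⟨p1, p2, p3⟩ ⟨q1, q2, q3⟩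
  rw [Matrix.diagonal_mul, Matrix.mul_diagonal]
  show Dl (p1, p2, p3) * (if p1 = q1 then _ else 0) =
    (if p1 = q1 then _ else 0) * Dr (q1, q2, q3)
  by_cases h1 : p1 = q1
  · subst h1
    rw [if_pos rfl, if_pos rfl]
    dsimp only
    rcases eq_or_ne ((p2, p3) : Fin n × Fin n) ((q2, q3) : Fin n × Fin n) with hpq | hpq
    · cases hpq
      rw [if_pos rfl, hA]
      ring
    · rw [if_neg hpq, one_mul]
      show Dl (p1, p2, p3) * glnMat _ _ (p2, p3) (q2, q3) =
        glnMat _ _ (p2, p3) (q2, q3) * Dr (p1, q2, q3)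
      simp only [glnMat, if_neg hpq]
      by_cases hsw : (p2, p3).1 = (q2, q3).2 ∧ (p2, p3).2 = (q2, q3).1
      · obtain ⟨hs1, hs2⟩ := hsw
        simp only at hs1 hs2
        subst hs1; subst hs2
        rw [hB]
        ring
      · rw [if_neg hsw]
        ring
  · rw [if_neg h1, if_neg h1, mul_zero, zero_mul]

end Mat

lemma sandwich_cancel {I : Type*} [Fintype I] [DecidableEq I]
    {d0 d1 d2 d3 e1 e2 e3 : I → ℂ}
    {X1 X2 X3 Z1 Z2 Z3 Y1 Y2 Y3 W1 W2 W3 : Matrix I I ℂ}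
    (hd : ∀ p, d0 p ≠ 0)
    (h1 : Matrix.diagonal d0 * X1 = Y1 * Matrix.diagonal d1)
    (h2 : Matrix.diagonal d1 * X2 = Y2 * Matrix.diagonal d2)
    (h3 : Matrix.diagonal d2 * X3 = Y3 * Matrix.diagonal d3)
    (g1 : Matrix.diagonal d0 * Z1 = W1 * Matrix.diagonal e1)
    (g2 : Matrix.diagonal e1 * Z2 = W2 * Matrix.diagonal e2)
    (g3 : Matrix.diagonal e2 * Z3 = W3 * Matrix.diagonal e3)
    (he : ∀ p, e3 p = d3 p)
    (hYW : Y1 * Y2 * Y3 = W1 * W2 * W3) :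
    X1 * X2 * X3 = Z1 * Z2 * Z3 := by
  have he' : Matrix.diagonal e3 = Matrix.diagonal d3 :=
    congrArg Matrix.diagonal (funext he)
  have hL : Matrix.diagonal d0 * (X1 * X2 * X3) =
      (Y1 * Y2 * Y3) * Matrix.diagonal d3 := by
    calc Matrix.diagonal d0 * (X1 * X2 * X3)
        = ((Matrix.diagonal d0 * X1) * X2) * X3 := by noncomm_ring
      _ = ((Y1 * Matrix.diagonal d1) * X2) * X3 := by rw [h1]
      _ = (Y1 * (Matrix.diagonal d1 * X2)) * X3 := by noncomm_ring
      _ = (Y1 * (Y2 * Matrix.diagonal d2)) * X3 := by rw [h2]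
      _ = (Y1 * Y2) * (Matrix.diagonal d2 * X3) := by noncomm_ring
      _ = (Y1 * Y2) * (Y3 * Matrix.diagonal d3) := by rw [h3]
      _ = (Y1 * Y2 * Y3) * Matrix.diagonal d3 := by noncomm_ring
  have hZ : Matrix.diagonal d0 * (Z1 * Z2 * Z3) =
      (W1 * W2 * W3) * Matrix.diagonal d3 := by
    calc Matrix.diagonal d0 * (Z1 * Z2 * Z3)
        = ((Matrix.diagonal d0 * Z1) * Z2) * Z3 := by noncomm_ring
      _ = ((W1 * Matrix.diagonal e1) * Z2) * Z3 := by rw [g1]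
      _ = (W1 * (Matrix.diagonal e1 * Z2)) * Z3 := by noncomm_ring
      _ = (W1 * (W2 * Matrix.diagonal e2)) * Z3 := by rw [g2]
      _ = (W1 * W2) * (Matrix.diagonal e2 * Z3) := by noncomm_ring
      _ = (W1 * W2) * (W3 * Matrix.diagonal e3) := by rw [g3]
      _ = (W1 * W2 * W3) * Matrix.diagonal d3 := by rw [he']; noncomm_ring
  have hkey : Matrix.diagonal d0 * (X1 * X2 * X3) =
      Matrix.diagonal d0 * (Z1 * Z2 * Z3) := by
    rw [hL, hZ, hYW]
  ext p q
  have h := congrFun (congrFun hkey p) q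
  rw [Matrix.diagonal_mul, Matrix.diagonal_mul] at h
  exact mul_left_cancel₀ (hd p) h

end QDYBGauge

/-- gauge transformation by a `γ`-closed multiplicative
2-form.  If `R` of `gl_n` type (with coefficients `α`, `β`) satisfies the QDYB
equation with step `γ`, and `φ` is a `γ`-closed multiplicative 2-form, then the
matrix `R̃` obtained from `R` by multiplying each off-diagonal coefficient
`α_{m,l}` by `φ_{m,l}` also satisfies the QDYB equation with step `γ`. -/
theorem qdyb_gauge_closed_two_form (n : ℕ) (hn : 1 ≤ n) (γ : ℂ)
    (α β : Fin n → Fin n → ℂ → Wt n → ℂ)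
    (hR : QDYB n γ (fun u lam =>
      glnMat (fun m l => α m l u lam) (fun m l => β m l u lam)))
    (φ : Fin n → Fin n → Wt n → ℂˣ)
    (hskew : ∀ m l : Fin n, ∀ lam : Wt n, φ m l lam * φ l m lam = 1)
    (hclosed : ∀ a b c : Fin n, a ≠ b → b ≠ c → a ≠ c → ∀ lam : Wt n,
      mdelta n γ a (φ b c) lam * (mdelta n γ b (φ a c) lam)⁻¹ *
          mdelta n γ c (φ a b) lam = 1) :
    QDYB n γ (fun u lam =>
      glnMat
        (fun m l => if m = l then α m l u lam else (φ m l lam : ℂ) * α m l u lam)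
        (fun m l => β m l u lam)) := by
  intro u₁ u₂ u₃ lam
  have hsk := QDYBGauge.ph_skew φ hskew
  have hpc := QDYBGauge.ph_closed γ φ hskew hclosed
  have hT : ∀ u : ℂ,
      (fun lam' => glnMat
          (fun m l => if m = l then α m l u lam' else (φ m l lam' : ℂ) * α m l u lam')
          (fun m l => β m l u lam'))
        = (fun μ => fun p q => (if p = q then QDYBGauge.ph φ p.1 p.2 μ else 1) *
            glnMat (fun m l => α m l u μ) (fun m l => β m l u μ) p q) := by
    intro u
    funext μ
    exact funext fun p => funext fun q =>
      QDYBGauge.tilde_entry (fun m l μ' => α m l u μ') (fun m l μ' => β m l u μ') φ μ p q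
  dsimp only
  rw [hT (u₁ - u₂), hT (u₁ - u₃), hT (u₂ - u₃)]
  set D0f : Fin n × Fin n × Fin n → ℂ :=
    fun t => QDYBGauge.D0 γ φ lam t.1 t.2.1 t.2.2 with hD0f
  set D1f : Fin n × Fin n × Fin n → ℂ :=
    fun t => D0f t * QDYBGauge.ph φ t.1 t.2.1 (lam - γ • eps n t.2.2) with hD1f
  set D2f : Fin n × Fin n × Fin n → ℂ :=
    fun t => D1f t * QDYBGauge.ph φ t.1 t.2.2 lam with hD2f
  set D3f : Fin n × Fin n × Fin n → ℂ :=
    fun t => D2f t * QDYBGauge.ph φ t.2.1 t.2.2 (lam - γ • eps n t.1) with hD3f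
  set E1f : Fin n × Fin n × Fin n → ℂ :=
    fun t => D0f t * QDYBGauge.ph φ t.2.1 t.2.2 lam with hE1f
  set E2f : Fin n × Fin n × Fin n → ℂ :=
    fun t => E1f t * QDYBGauge.ph φ t.1 t.2.2 (lam - γ • eps n t.2.1) with hE2f
  set E3f : Fin n × Fin n × Fin n → ℂ :=
    fun t => E2f t * QDYBGauge.ph φ t.1 t.2.1 lam with hE3f
  have hd : ∀ p : Fin n × Fin n × Fin n, D0f p ≠ 0 :=
    fun p => QDYBGauge.D0_ne γ φ lam p.1 p.2.1 p.2.2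
  have h1 := QDYBGauge.L12 (fun m l μ' => α m l (u₁ - u₂) μ')
    (fun m l μ' => β m l (u₁ - u₂) μ') φ lam (fun c => γ • eps n c) D0f D1f
    (fun a b c => rfl)
    (fun a b c => QDYBGauge.Ri γ φ hsk hpc lam b a c)
  have h2 := QDYBGauge.L13 (fun m l μ' => α m l (u₁ - u₃) μ')
    (fun m l μ' => β m l (u₁ - u₃) μ') φ lam (fun _ => (0 : Wt n)) D1f D2f
    (fun a b c => by simp only [sub_zero, hD1f, hD2f])
    (fun a b c => QDYBGauge.B13 γ φ hsk hpc lam a b c)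
  have h3 := QDYBGauge.L23 (fun m l μ' => α m l (u₂ - u₃) μ')
    (fun m l μ' => β m l (u₂ - u₃) μ') φ lam (fun a => γ • eps n a) D2f D3f
    (fun a b c => rfl)
    (fun a b c => QDYBGauge.B23 γ φ hsk hpc lam a b c)
  have g1 := QDYBGauge.L23 (fun m l μ' => α m l (u₂ - u₃) μ')
    (fun m l μ' => β m l (u₂ - u₃) μ') φ lam (fun _ => (0 : Wt n)) D0f E1f
    (fun a b c => by simp only [sub_zero, hD0f, hE1f])
    (fun a b c => QDYBGauge.B23' γ φ hsk lam a b c)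
  have g2 := QDYBGauge.L13 (fun m l μ' => α m l (u₁ - u₃) μ')
    (fun m l μ' => β m l (u₁ - u₃) μ') φ lam (fun b => γ • eps n b) E1f E2f
    (fun a b c => rfl)
    (fun a b c => QDYBGauge.B13' γ φ hsk hpc lam a b c)
  have g3 := QDYBGauge.L12 (fun m l μ' => α m l (u₁ - u₂) μ')
    (fun m l μ' => β m l (u₁ - u₂) μ') φ lam (fun _ => (0 : Wt n)) E2f E3f
    (fun a b c => by simp only [sub_zero, hE2f, hE3f])
    (fun a b c => QDYBGauge.B12' γ φ hsk hpc lam a b c)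
  have he : ∀ p : Fin n × Fin n × Fin n, E3f p = D3f p :=
    fun p => QDYBGauge.ED γ φ hpc lam p.1 p.2.1 p.2.2
  exact QDYBGauge.sandwich_cancel hd h1 h2 h3 g1 g2 g3 he (hR u₁ u₂ u₃ lam)
end
end

section
/- Let R be a weight-preserving solution of the QDYB equation with spectral parameter and step γ. Let L_W be an L-operator for R on W = ℂᴺ with weight map w, and let L_U be an L-operator for R on U = ℂᴹ with weight map u'. Give W ⊗ U the weight grading in which f_i ⊗ f'_j has weight w(i) + u'(j), and define L_{W⊙U} : ℂ × ℂⁿ → End(V ⊗ (W ⊗ U)) by L_{W⊙U}(u, λ) = L_W^{12}(u, λ − γh^{(3)}) · L_U^{13}(u, λ), where the superscripts refer to the three factors of V ⊗ W ⊗ U and h^{(3)} is the weight of the U-factor. Then L_{W⊙U} is weight-preserving and is an L-operator for R on W ⊗ U. -/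
noncomputable section

variable {n : ℕ}

section Aux
set_option linter.unusedSectionVars false

variable {A B C D : Type*} [Fintype A] [Fintype B] [Fintype C] [Fintype D]
variable [DecidableEq A] [DecidableEq B] [DecidableEq C] [DecidableEq D]

/-- `X^{12}` on a four-fold tensor product, shift governed by factors 3,4. -/
def D12 (X : Wt n → Matrix (A × B) (A × B) ℂ) (sh : C → D → Wt n) (lam : Wt n) :
    Matrix (A × B × C × D) (A × B × C × D) ℂ :=
  fun p q => if p.2.2.1 = q.2.2.1 ∧ p.2.2.2 = q.2.2.2 then
    X (lam - sh p.2.2.1 p.2.2.2) ((p.1, p.2.1)) ((q.1, q.2.1)) else 0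

def D13 (X : Wt n → Matrix (A × C) (A × C) ℂ) (sh : B → D → Wt n) (lam : Wt n) :
    Matrix (A × B × C × D) (A × B × C × D) ℂ :=
  fun p q => if p.2.1 = q.2.1 ∧ p.2.2.2 = q.2.2.2 then
    X (lam - sh p.2.1 p.2.2.2) ((p.1, p.2.2.1)) ((q.1, q.2.2.1)) else 0

def D14 (X : Wt n → Matrix (A × D) (A × D) ℂ) (sh : B → C → Wt n) (lam : Wt n) :
    Matrix (A × B × C × D) (A × B × C × D) ℂ :=
  fun p q => if p.2.1 = q.2.1 ∧ p.2.2.1 = q.2.2.1 then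
    X (lam - sh p.2.1 p.2.2.1) ((p.1, p.2.2.2)) ((q.1, q.2.2.2)) else 0

def D23 (X : Wt n → Matrix (B × C) (B × C) ℂ) (sh : A → D → Wt n) (lam : Wt n) :
    Matrix (A × B × C × D) (A × B × C × D) ℂ :=
  fun p q => if p.1 = q.1 ∧ p.2.2.2 = q.2.2.2 then
    X (lam - sh p.1 p.2.2.2) ((p.2.1, p.2.2.1)) ((q.2.1, q.2.2.1)) else 0

def D24 (X : Wt n → Matrix (B × D) (B × D) ℂ) (sh : A → C → Wt n) (lam : Wt n) :
    Matrix (A × B × C × D) (A × B × C × D) ℂ :=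
  fun p q => if p.1 = q.1 ∧ p.2.2.1 = q.2.2.1 then
    X (lam - sh p.1 p.2.2.1) ((p.2.1, p.2.2.2)) ((q.2.1, q.2.2.2)) else 0

/-- Lift a family on `A × B × C` to `A × B × C × D`, diagonally in `D`,
with parameter substitution `lam ↦ lam - g d`. -/
def liftD (P : Wt n → Matrix (A × B × C) (A × B × C) ℂ) (g : D → Wt n) (lam : Wt n) :
    Matrix (A × B × C × D) (A × B × C × D) ℂ :=
  fun p q => if p.2.2.2 = q.2.2.2 then
    P (lam - g p.2.2.2) (p.1, p.2.1, p.2.2.1) (q.1, q.2.1, q.2.2.1) else 0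

/-- Lift a matrix on `A × B × D` to `A × B × C × D`, diagonally in `C`. -/
def liftC (P : Matrix (A × B × D) (A × B × D) ℂ) :
    Matrix (A × B × C × D) (A × B × C × D) ℂ :=
  fun p q => if p.2.2.1 = q.2.2.1 then
    P (p.1, p.2.1, p.2.2.2) (q.1, q.2.1, q.2.2.2) else 0

lemma liftD_mul (P Q : Wt n → Matrix (A × B × C) (A × B × C) ℂ) (g : D → Wt n) (lam : Wt n) :
    liftD (D := D) (fun l => P l * Q l) g lam = liftD P g lam * liftD Q g lam := by
  ext ⟨a, b, k, m⟩ ⟨a', b', k', m'⟩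
  simp [liftD, Matrix.mul_apply, Fintype.sum_prod_type, ite_and, mul_ite, ite_mul,
    mul_zero, zero_mul, Finset.sum_ite_eq, Finset.sum_ite_eq']
  try (split_ifs <;> simp_all)

lemma liftC_mul (P Q : Matrix (A × B × D) (A × B × D) ℂ) :
    liftC (C := C) (P * Q) = liftC P * liftC Q := by
  ext ⟨a, b, k, m⟩ ⟨a', b', k', m'⟩
  simp [liftC, Matrix.mul_apply, Fintype.sum_prod_type, ite_and, mul_ite, ite_mul,
    mul_zero, zero_mul, Finset.sum_ite_eq, Finset.sum_ite_eq']
  try (split_ifs <;> simp_all)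

lemma liftD_congr (P P' : Wt n → Matrix (A × B × C) (A × B × C) ℂ) (g : D → Wt n) (lam : Wt n)
    (h : ∀ l, P l = P' l) : liftD (D := D) P g lam = liftD P' g lam := by
  ext p q; simp [liftD, h]

lemma liftD_dop12 (X : Wt n → Matrix (A × B) (A × B) ℂ) (sh : C → Wt n) (g : D → Wt n)
    (lam : Wt n) :
    liftD (fun l => dop12 X sh l) g lam = D12 X (fun c d => sh c + g d) lam := by
  ext ⟨a, b, k, m⟩ ⟨a', b', k', m'⟩
  simp only [liftD, dop12, D12, ite_and]
  split_ifs <;> first | rfl | (congr 1; abel)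

lemma liftD_dop13 (X : Wt n → Matrix (A × C) (A × C) ℂ) (sh : B → Wt n) (g : D → Wt n)
    (lam : Wt n) :
    liftD (fun l => dop13 X sh l) g lam = D13 X (fun b d => sh b + g d) lam := by
  ext ⟨a, b, k, m⟩ ⟨a', b', k', m'⟩
  simp only [liftD, dop13, D13, ite_and]
  split_ifs <;> first | rfl | (congr 1; abel)

lemma liftD_dop23 (X : Wt n → Matrix (B × C) (B × C) ℂ) (sh : A → Wt n) (g : D → Wt n)
    (lam : Wt n) :
    liftD (fun l => dop23 X sh l) g lam = D23 X (fun a d => sh a + g d) lam := by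
  ext ⟨a, b, k, m⟩ ⟨a', b', k', m'⟩
  simp only [liftD, dop23, D23, ite_and]
  split_ifs <;> first | rfl | (congr 1; abel)

lemma liftC_dop12 (X : Wt n → Matrix (A × B) (A × B) ℂ) (sh : D → Wt n) (lam : Wt n) :
    liftC (C := C) (dop12 X sh lam) = D12 X (fun _ d => sh d) lam := by
  ext ⟨a, b, k, m⟩ ⟨a', b', k', m'⟩
  simp only [liftC, dop12, D12, ite_and]
  try (split_ifs <;> rfl)

lemma liftC_dop13 (X : Wt n → Matrix (A × D) (A × D) ℂ) (sh : B → Wt n) (lam : Wt n) :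
    liftC (C := C) (dop13 X sh lam) = D14 X (fun b _ => sh b) lam := by
  ext ⟨a, b, k, m⟩ ⟨a', b', k', m'⟩
  simp only [liftC, dop13, D14, ite_and]
  try (split_ifs <;> rfl)

lemma liftC_dop23 (X : Wt n → Matrix (B × D) (B × D) ℂ) (sh : A → Wt n) (lam : Wt n) :
    liftC (C := C) (dop23 X sh lam) = D24 X (fun a _ => sh a) lam := by
  ext ⟨a, b, k, m⟩ ⟨a', b', k', m'⟩
  simp only [liftC, dop23, D24, ite_and]
  try (split_ifs <;> rfl)

lemma liftD_mul3 (P Q S : Wt n → Matrix (A × B × C) (A × B × C) ℂ) (g : D → Wt n)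
    (lam : Wt n) :
    liftD (D := D) (fun l => P l * Q l * S l) g lam
      = liftD P g lam * liftD Q g lam * liftD S g lam := by
  calc liftD (D := D) (fun l => P l * Q l * S l) g lam
      = liftD (fun l => P l * Q l) g lam * liftD S g lam := liftD_mul _ _ _ _
    _ = _ := by rw [liftD_mul]

lemma liftC_mul3 (P Q S : Matrix (A × B × D) (A × B × D) ℂ) :
    liftC (C := C) (P * Q * S) = liftC P * liftC Q * liftC S := by
  rw [liftC_mul, liftC_mul]

/-- Decomposition of `dop13` of a product `L = L_W^{12} · L_U^{13}`. -/
lemma dop13_mul_decomp (P : Wt n → Matrix (A × C) (A × C) ℂ)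
    (Q : Wt n → Matrix (A × D) (A × D) ℂ) (sh2 : D → Wt n) (sh : B → Wt n) (lam : Wt n) :
    dop13 (fun l => dop12 P sh2 l * dop13 Q (fun _ : C => (0 : Wt n)) l) sh lam
      = D13 P (fun b d => sh b + sh2 d) lam * D14 Q (fun b _ => sh b) lam := by
  ext ⟨a, b, k, m⟩ ⟨a', b', k', m'⟩
  simp [dop12, dop13, D13, D14, Matrix.mul_apply, Fintype.sum_prod_type, ite_and,
    mul_ite, ite_mul, mul_zero, zero_mul, Finset.sum_ite_eq, Finset.sum_ite_eq',
    sub_zero, sub_add_eq_sub_sub]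
  try (split_ifs <;> simp_all)

/-- Decomposition of `dop23` of a product `L = L_W^{12} · L_U^{13}`. -/
lemma dop23_mul_decomp (P : Wt n → Matrix (B × C) (B × C) ℂ)
    (Q : Wt n → Matrix (B × D) (B × D) ℂ) (sh2 : D → Wt n) (sh : A → Wt n) (lam : Wt n) :
    dop23 (fun l => dop12 P sh2 l * dop13 Q (fun _ : C => (0 : Wt n)) l) sh lam
      = D23 P (fun a d => sh a + sh2 d) lam * D24 Q (fun a _ => sh a) lam := by
  ext ⟨a, b, k, m⟩ ⟨a', b', k', m'⟩
  rcases eq_or_ne a a' with rfl | h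
  · simp [dop23, dop12, dop13, D23, D24, Matrix.mul_apply, Fintype.sum_prod_type, ite_and,
      mul_ite, ite_mul, mul_zero, zero_mul, Finset.sum_ite_eq, Finset.sum_ite_eq',
      sub_zero, sub_add_eq_sub_sub]
  · simp [dop23, D23, D24, Matrix.mul_apply, Fintype.sum_prod_type, ite_and,
      mul_ite, ite_mul, mul_zero, zero_mul, Finset.sum_ite_eq, Finset.sum_ite_eq', h]

lemma dop12_pair (X : Wt n → Matrix (A × B) (A × B) ℂ) (sh : C → Wt n) (sh2 : D → Wt n)
    (lam : Wt n) :
    dop12 X (fun cd : C × D => sh cd.1 + sh2 cd.2) lam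
      = D12 X (fun c d => sh c + sh2 d) lam := by
  ext ⟨a, b, k, m⟩ ⟨a', b', k', m'⟩
  simp [dop12, D12, Prod.ext_iff, ite_and]

lemma dop12_pair0 (X : Wt n → Matrix (A × B) (A × B) ℂ) (lam : Wt n) :
    dop12 X (fun _ : C × D => (0 : Wt n)) lam
      = D12 X (fun _ _ => (0 : Wt n)) lam := by
  ext ⟨a, b, k, m⟩ ⟨a', b', k', m'⟩
  simp [dop12, D12, Prod.ext_iff, ite_and]

/-- `L_U^{14}` commutes with `L_W^{23}` whose shift depends on the total
weight of factors 1 and 4, which `L_U^{14}` preserves. -/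
lemma D14_D23_comm (P : Wt n → Matrix (B × C) (B × C) ℂ)
    (Q : Wt n → Matrix (A × D) (A × D) ℂ) (wA : A → Wt n) (wD : D → Wt n)
    (γ : ℂ) (lam : Wt n) (hQ : IsWeightPres wA wD (Q lam)) :
    D14 Q (fun _ _ => (0 : Wt n)) lam * D23 P (fun a d => γ • wA a + γ • wD d) lam
      = D23 P (fun a d => γ • wA a + γ • wD d) lam
          * D14 Q (fun _ _ => (0 : Wt n)) lam := by
  ext ⟨a, b, k, m⟩ ⟨a', b', k', m'⟩
  simp [D14, D23, Matrix.mul_apply, Fintype.sum_prod_type, ite_and, mul_ite, ite_mul,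
    mul_zero, zero_mul, Finset.sum_ite_eq, Finset.sum_ite_eq', sub_zero]
  by_cases hq : Q lam (a, m) (a', m') = 0
  · simp [hq]
  · have h2 : γ • wA a + γ • wD m = γ • wA a' + γ • wD m' := by
      rw [← smul_add, ← smul_add, hQ (a, m) (a', m') hq]
    rw [← h2, mul_comm]

lemma D13_D24_comm (P : Wt n → Matrix (A × C) (A × C) ℂ)
    (Q : Wt n → Matrix (B × D) (B × D) ℂ) (wB : B → Wt n) (wD : D → Wt n)
    (γ : ℂ) (lam : Wt n) (hQ : IsWeightPres wB wD (Q lam)) :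
    D13 P (fun b d => γ • wB b + γ • wD d) lam * D24 Q (fun _ _ => (0 : Wt n)) lam
      = D24 Q (fun _ _ => (0 : Wt n)) lam
          * D13 P (fun b d => γ • wB b + γ • wD d) lam := by
  ext ⟨a, b, k, m⟩ ⟨a', b', k', m'⟩
  simp [D13, D24, Matrix.mul_apply, Fintype.sum_prod_type, ite_and, mul_ite, ite_mul,
    mul_zero, zero_mul, Finset.sum_ite_eq, Finset.sum_ite_eq', sub_zero]
  by_cases hq : Q lam (b, m) (b', m') = 0
  · simp [hq]
  · have h2 : γ • wB b + γ • wD m = γ • wB b' + γ • wD m' := by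
      rw [← smul_add, ← smul_add, hQ (b, m) (b', m') hq]
    rw [h2, mul_comm]

/-- Products of weight-preserving matrices are weight-preserving. -/
lemma IsWeightPres.mul {A B : Type*} [Fintype A] [Fintype B]
    {wA : A → Wt n} {wB : B → Wt n} {X Y : Matrix (A × B) (A × B) ℂ}
    (hX : IsWeightPres wA wB X) (hY : IsWeightPres wA wB Y) :
    IsWeightPres wA wB (X * Y) := by
  intro p q h
  rw [Matrix.mul_apply] at h
  obtain ⟨r, -, hr⟩ := Finset.exists_ne_zero_of_sum_ne_zero h
  exact (hX p r (left_ne_zero_of_mul hr)).trans (hY r q (right_ne_zero_of_mul hr))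

lemma wp_dop12 (X : Wt n → Matrix (A × B) (A × B) ℂ) (sh : C → Wt n) (lam : Wt n)
    (wA : A → Wt n) (wB : B → Wt n) (wC : C → Wt n)
    (h : ∀ l, IsWeightPres wA wB (X l)) :
    IsWeightPres wA (fun km : B × C => wB km.1 + wC km.2) (dop12 X sh lam) := by
  rintro ⟨a, k, m⟩ ⟨a', k', m'⟩ hne
  simp only [dop12] at hne
  split_ifs at hne with hc
  · obtain rfl : m = m' := hc
    have h2 := h _ (a, k) (a', k') hne
    simp only at h2 ⊢
    rw [← add_assoc, ← add_assoc, h2]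
  · exact absurd rfl hne

lemma wp_dop13 (X : Wt n → Matrix (A × C) (A × C) ℂ) (sh : B → Wt n) (lam : Wt n)
    (wA : A → Wt n) (wB : B → Wt n) (wC : C → Wt n)
    (h : ∀ l, IsWeightPres wA wC (X l)) :
    IsWeightPres wA (fun km : B × C => wB km.1 + wC km.2) (dop13 X sh lam) := by
  rintro ⟨a, k, m⟩ ⟨a', k', m'⟩ hne
  simp only [dop13] at hne
  split_ifs at hne with hc
  · obtain rfl : k = k' := hc
    have h2 := h _ (a, m) (a', m') hne
    simp only at h2 ⊢
    rw [add_left_comm, h2, add_left_comm]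
  · exact absurd rfl hne

end Aux

/-- tensor product of representations.  If `L_W` and `L_U`
are L-operators for `R` on `W = ℂᴺ` (weights `w`) and `U = ℂᴹ` (weights `w'`),
then `L_{W⊙U}(u,λ) = L_W^{12}(u, λ − γh^{(3)}) · L_U^{13}(u, λ)` is a
weight-preserving L-operator for `R` on `W ⊗ U`, whose basis vector indexed by
`(i, j)` carries the weight `w(i) + w'(j)`. -/
theorem lop_tensor (n N M : ℕ) (hn : 1 ≤ n) (hN : 1 ≤ N) (hM : 1 ≤ M) (γ : ℂ)
    (R : ℂ → Wt n → Matrix (Fin n × Fin n) (Fin n × Fin n) ℂ)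
    (hwt : ∀ u lam, IsWeightPres (eps n) (eps n) (R u lam))
    (hR : QDYB n γ R)
    (w : Fin N → Wt n)
    (LW : ℂ → Wt n → Matrix (Fin n × Fin N) (Fin n × Fin N) ℂ)
    (hLW : IsLOperator n γ R w LW)
    (w' : Fin M → Wt n)
    (LU : ℂ → Wt n → Matrix (Fin n × Fin M) (Fin n × Fin M) ℂ)
    (hLU : IsLOperator n γ R w' LU) :
    IsLOperator n γ R (fun k : Fin N × Fin M => w k.1 + w' k.2)
      (fun u lam =>
        dop12 (LW u) (fun j : Fin M => γ • w' j) lam *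
          dop13 (LU u) (fun _ : Fin N => (0 : Wt n)) lam) := by
  obtain ⟨hW1, hW2⟩ := hLW
  obtain ⟨hU1, hU2⟩ := hLU
  constructor
  · intro u lam
    exact (wp_dop12 (LW u) _ lam (eps n) w w' (fun l => hW1 u l)).mul
      (wp_dop13 (LU u) _ lam (eps n) w w' (fun l => hU1 u l))
  · intro u₁ u₂ u₃ lam
    rw [dop13_mul_decomp, dop23_mul_decomp, dop13_mul_decomp, dop23_mul_decomp]
    have hsw : (fun c : Fin N × Fin M => γ • (w c.1 + w' c.2))
        = fun c : Fin N × Fin M => γ • w c.1 + γ • w' c.2 := by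
      funext c; rw [smul_add]
    rw [hsw, dop12_pair (R (u₁ - u₂)) (fun k : Fin N => γ • w k)
      (fun j : Fin M => γ • w' j) lam, dop12_pair0]
    simp only [zero_add]
    -- lifted RLL for `LW` (factor 4 spectator)
    have h := liftD_congr
      (fun l => dop12 (R (u₁ - u₂)) (fun c : Fin N => γ • w c) l *
        dop13 (LW (u₁ - u₃)) (fun _ : Fin n => (0 : Wt n)) l *
        dop23 (LW (u₂ - u₃)) (fun a : Fin n => γ • eps n a) l)
      (fun l => dop23 (LW (u₂ - u₃)) (fun _ : Fin n => (0 : Wt n)) l *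
        dop13 (LW (u₁ - u₃)) (fun b : Fin n => γ • eps n b) l *
        dop12 (R (u₁ - u₂)) (fun _ : Fin N => (0 : Wt n)) l)
      (fun m : Fin M => γ • w' m) lam (fun l => hW2 u₁ u₂ u₃ l)
    rw [liftD_mul3, liftD_mul3, liftD_dop12, liftD_dop13, liftD_dop23,
      liftD_dop23, liftD_dop13, liftD_dop12] at h
    simp only [zero_add] at h
    -- lifted RLL for `LU` (factor 3 spectator)
    have h' := congrArg (liftC (C := Fin N)) (hU2 u₁ u₂ u₃ lam)
    rw [liftC_mul3, liftC_mul3, liftC_dop12, liftC_dop13, liftC_dop23,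
      liftC_dop23, liftC_dop13, liftC_dop12] at h'
    -- commutation relations
    have hc1 := D14_D23_comm (LW (u₂ - u₃)) (LU (u₁ - u₃)) (eps n) w' γ lam
      (hU1 (u₁ - u₃) lam)
    have hc2 := D13_D24_comm (LW (u₁ - u₃)) (LU (u₂ - u₃)) (eps n) w' γ lam
      (hU1 (u₂ - u₃) lam)
    set R1 := D12 (R (u₁ - u₂)) (fun (c : Fin N) (d : Fin M) => γ • w c + γ • w' d) lam
    set R2 := D12 (R (u₁ - u₂)) (fun (_ : Fin N) (d : Fin M) => γ • w' d) lam
    set R0 := D12 (R (u₁ - u₂)) (fun (_ : Fin N) (_ : Fin M) => (0 : Wt n)) lam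
    set A13 := D13 (LW (u₁ - u₃)) (fun (_ : Fin n) (d : Fin M) => γ • w' d) lam
    set A13' := D13 (LW (u₁ - u₃)) (fun (b : Fin n) (d : Fin M) => γ • eps n b + γ • w' d) lam
    set A23 := D23 (LW (u₂ - u₃)) (fun (a : Fin n) (d : Fin M) => γ • eps n a + γ • w' d) lam
    set A23' := D23 (LW (u₂ - u₃)) (fun (_ : Fin n) (d : Fin M) => γ • w' d) lam
    set B14 := D14 (LU (u₁ - u₃)) (fun (_ : Fin n) (_ : Fin N) => (0 : Wt n)) lam
    set B14' := D14 (LU (u₁ - u₃)) (fun (b : Fin n) (_ : Fin N) => γ • eps n b) lam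
    set B24 := D24 (LU (u₂ - u₃)) (fun (a : Fin n) (_ : Fin N) => γ • eps n a) lam
    set B24' := D24 (LU (u₂ - u₃)) (fun (_ : Fin n) (_ : Fin N) => (0 : Wt n)) lam
    calc R1 * (A13 * B14) * (A23 * B24)
        = R1 * (A13 * (B14 * (A23 * B24))) := by simp only [mul_assoc]
      _ = R1 * (A13 * (A23 * (B14 * B24))) := by
            rw [show B14 * (A23 * B24) = A23 * (B14 * B24) from by
              rw [← mul_assoc, hc1, mul_assoc]]
      _ = A23' * (A13' * (R2 * (B14 * B24))) := by
            calc R1 * (A13 * (A23 * (B14 * B24)))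
                = (R1 * A13 * A23) * (B14 * B24) := by simp only [mul_assoc]
              _ = (A23' * A13' * R2) * (B14 * B24) := by rw [h]
              _ = _ := by simp only [mul_assoc]
      _ = A23' * (A13' * (B24' * (B14' * R0))) := by
            rw [show R2 * (B14 * B24) = B24' * (B14' * R0) from by
              rw [← mul_assoc, h', mul_assoc]]
      _ = A23' * (B24' * (A13' * (B14' * R0))) := by
            rw [show A13' * (B24' * (B14' * R0)) = B24' * (A13' * (B14' * R0)) from by
              rw [← mul_assoc, hc2, mul_assoc]]
      _ = A23' * B24' * (A13' * B14') * R0 := by simp only [mul_assoc]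
end
end

section
/- Let R be a weight-preserving solution of the QDYB equation with spectral parameter and step γ. Let L_W, L_U, L_{W'}, L_{U'} be L-operators for R on W, U, W', U' respectively (each a ℂ-space with a weight map as in the context). Suppose f : ℂⁿ → Hom(W, U) and g : ℂⁿ → Hom(W', U') are morphisms of representations of R, i.e. weight-preserving functions satisfying (1 ⊗ f(λ)) L_W(u, λ) = L_U(u, λ) (1 ⊗ f(λ − γh^{(1)})) and (1 ⊗ g(λ)) L_{W'}(u, λ) = L_{U'}(u, λ) (1 ⊗ g(λ − γh^{(1)})) for all u ∈ ℂ and λ ∈ ℂⁿ, where h^{(1)} is the weight of the V-factor. Define (f ⊙ g)(λ) : W ⊗ W' → U ⊗ U' as the map sending x ⊗ y (with y of weight μ) to f(λ − γμ)x ⊗ g(λ)y, i.e. (f ⊙ g)(λ) = f(λ − γh^{(2)}) ⊗ g(λ). Then f ⊙ g is a morphism from the tensor product representation (W ⊗ W', L_{W⊙W'}) to (U ⊗ U', L_{U⊙U'}), where L_{W⊙W'}(u, λ) = L_W^{12}(u, λ − γh^{(3)}) L_{W'}^{13}(u, λ) and similarly for L_{U⊙U'}. -/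
noncomputable section

variable {n : ℕ}

/-- The operator `1 ⊗ F(λ − sh(a))` on `V ⊗ W → V ⊗ U` (identity on the first
factor, `F : W → U` on the second, dynamical shift governed by the first). -/
def idTensD {n : ℕ} {A K K' : Type*} [DecidableEq A]
    (F : Wt n → Matrix K' K ℂ) (sh : A → Wt n) (lam : Wt n) :
    Matrix (A × K') (A × K) ℂ :=
  fun p q => if p.1 = q.1 then F (lam - sh p.1) p.2 q.2 else 0

/-- A morphism of representations of `R` from `(W, L_W)` to `(U, L_U)`: a
weight-preserving function `f : ℂⁿ → Hom(W, U)` with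
`(1 ⊗ f(λ)) L_W(u,λ) = L_U(u,λ) (1 ⊗ f(λ − γh^{(1)}))`. -/
def IsMorphism {K K' : Type*} [Fintype K] [DecidableEq K] [Fintype K'] [DecidableEq K']
    (n : ℕ) (γ : ℂ) (w : K → Wt n) (w' : K' → Wt n)
    (LW : ℂ → Wt n → Matrix (Fin n × K) (Fin n × K) ℂ)
    (LU : ℂ → Wt n → Matrix (Fin n × K') (Fin n × K') ℂ)
    (f : Wt n → Matrix K' K ℂ) : Prop :=
  (∀ lam i j, f lam i j ≠ 0 → w' i = w j) ∧
    ∀ u : ℂ, ∀ lam : Wt n,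
      idTensD f (fun _ : Fin n => (0 : Wt n)) lam * LW u lam =
        LU u lam * idTensD f (fun a : Fin n => γ • eps n a) lam

lemma sum_comm3 {α β δ : Type*} [Fintype α] [Fintype β] [Fintype δ] {M : Type*}
    [AddCommMonoid M] (f : α → β → δ → M) :
    ∑ a, ∑ b, ∑ c, f a b c = ∑ c, ∑ a, ∑ b, f a b c :=
  calc ∑ a, ∑ b, ∑ c, f a b c = ∑ a, ∑ c, ∑ b, f a b c :=
        Finset.sum_congr rfl fun _ _ => Finset.sum_comm
    _ = ∑ c, ∑ a, ∑ b, f a b c := Finset.sum_comm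

lemma aux_morph_entry {K K' : Type*} [Fintype K] [DecidableEq K] [Fintype K'] [DecidableEq K']
    {n : ℕ} {γ : ℂ}
    {LW : ℂ → Wt n → Matrix (Fin n × K) (Fin n × K) ℂ}
    {LU : ℂ → Wt n → Matrix (Fin n × K') (Fin n × K') ℂ}
    {f : Wt n → Matrix K' K ℂ}
    (u : ℂ) (lam : Wt n)
    (hf : idTensD f (fun _ : Fin n => (0 : Wt n)) lam * LW u lam =
        LU u lam * idTensD f (fun a : Fin n => γ • eps n a) lam)
    (d b : Fin n) (j₀' : K') (j₂ : K) :
    ∑ j₁, f lam j₀' j₁ * LW u lam (d, j₁) (b, j₂)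
      = ∑ j₄', LU u lam (d, j₀') (b, j₄') * f (lam - γ • eps n b) j₄' j₂ := by
  have h := congrFun (congrFun hf (d, j₀')) (b, j₂)
  simpa [Matrix.mul_apply, idTensD, Fintype.sum_prod_type, ite_mul, mul_ite, zero_mul, mul_zero,
    Finset.sum_ite_eq, Finset.sum_ite_eq'] using h

/-- tensor product of morphisms.  If `f : (W, L_W) → (U, L_U)`
and `g : (W', L_{W'}) → (U', L_{U'})` are morphisms of representations of `R`,
then `(f ⊙ g)(λ) = f(λ − γh^{(2)}) ⊗ g(λ)` is a morphism from the tensor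
product representation `(W ⊗ W', L_{W⊙W'})` to `(U ⊗ U', L_{U⊙U'})`, where
`L_{W⊙W'}(u,λ) = L_W^{12}(u, λ − γh^{(3)}) L_{W'}^{13}(u,λ)` and similarly for
`L_{U⊙U'}`. -/
theorem morphism_tensor (n N N' M M' : ℕ) (hn : 1 ≤ n) (γ : ℂ)
    (R : ℂ → Wt n → Matrix (Fin n × Fin n) (Fin n × Fin n) ℂ)
    (hwt : ∀ u lam, IsWeightPres (eps n) (eps n) (R u lam))
    (hR : QDYB n γ R)
    (wW : Fin N → Wt n) (wU : Fin N' → Wt n)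
    (wW' : Fin M → Wt n) (wU' : Fin M' → Wt n)
    (LW : ℂ → Wt n → Matrix (Fin n × Fin N) (Fin n × Fin N) ℂ)
    (LU : ℂ → Wt n → Matrix (Fin n × Fin N') (Fin n × Fin N') ℂ)
    (LW' : ℂ → Wt n → Matrix (Fin n × Fin M) (Fin n × Fin M) ℂ)
    (LU' : ℂ → Wt n → Matrix (Fin n × Fin M') (Fin n × Fin M') ℂ)
    (hLW : IsLOperator n γ R wW LW) (hLU : IsLOperator n γ R wU LU)
    (hLW' : IsLOperator n γ R wW' LW') (hLU' : IsLOperator n γ R wU' LU')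
    (f : Wt n → Matrix (Fin N') (Fin N) ℂ)
    (g : Wt n → Matrix (Fin M') (Fin M) ℂ)
    (hf : IsMorphism n γ wW wU LW LU f)
    (hg : IsMorphism n γ wW' wU' LW' LU' g) :
    IsMorphism n γ
      (fun k : Fin N × Fin M => wW k.1 + wW' k.2)
      (fun k : Fin N' × Fin M' => wU k.1 + wU' k.2)
      (fun u lam =>
        dop12 (LW u) (fun j : Fin M => γ • wW' j) lam *
          dop13 (LW' u) (fun _ : Fin N => (0 : Wt n)) lam)
      (fun u lam =>
        dop12 (LU u) (fun j : Fin M' => γ • wU' j) lam *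
          dop13 (LU' u) (fun _ : Fin N' => (0 : Wt n)) lam)
      (fun lam (p : Fin N' × Fin M') (q : Fin N × Fin M) =>
        f (lam - γ • wW' q.2) p.1 q.1 * g lam p.2 q.2) := by
  constructor
  · rintro lam ⟨i', j'⟩ ⟨i, j⟩ h
    have h1 := hf.1 _ _ _ (left_ne_zero_of_mul h)
    have h2 := hg.1 _ _ _ (right_ne_zero_of_mul h)
    simp only [h1, h2]
  · intro u lam
    ext ⟨a, i₀', j₀'⟩ ⟨b, i₂, j₂⟩
    simp only [Matrix.mul_apply, idTensD, dop12, dop13, Fintype.sum_prod_type, ite_mul, mul_ite,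
      zero_mul, mul_zero, Finset.sum_ite_eq, Finset.sum_ite_eq', Finset.mem_univ, if_true,
      sub_zero, Finset.sum_ite_irrel, Finset.sum_const_zero]
    set lam' := lam - γ • wU' j₀' with hlam'
    calc
      ∑ i₁, ∑ j₁, f (lam - γ • wW' j₁) i₀' i₁ * g lam j₀' j₁ *
            ∑ d, LW u (lam - γ • wW' j₁) (a, i₁) (d, i₂) * LW' u lam (d, j₁) (b, j₂)
          = ∑ i₁, ∑ j₁, f lam' i₀' i₁ * g lam j₀' j₁ *
            ∑ d, LW u lam' (a, i₁) (d, i₂) * LW' u lam (d, j₁) (b, j₂) := by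
            refine Finset.sum_congr rfl fun i₁ _ => Finset.sum_congr rfl fun j₁ _ => ?_
            by_cases hgz : g lam j₀' j₁ = 0
            · simp [hgz]
            · rw [hlam', hg.1 lam j₀' j₁ hgz]
      _ = ∑ i₁, ∑ j₁, ∑ d, f lam' i₀' i₁ * g lam j₀' j₁ *
            (LW u lam' (a, i₁) (d, i₂) * LW' u lam (d, j₁) (b, j₂)) := by
            simp only [Finset.mul_sum]
      _ = ∑ d, ∑ i₁, ∑ j₁, f lam' i₀' i₁ * g lam j₀' j₁ *
            (LW u lam' (a, i₁) (d, i₂) * LW' u lam (d, j₁) (b, j₂)) := sum_comm3 _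
      _ = ∑ d, (∑ i₁, f lam' i₀' i₁ * LW u lam' (a, i₁) (d, i₂)) *
            (∑ j₁, g lam j₀' j₁ * LW' u lam (d, j₁) (b, j₂)) := by
            refine Finset.sum_congr rfl fun d _ => ?_
            rw [Finset.sum_mul_sum]
            exact Finset.sum_congr rfl fun i₁ _ => Finset.sum_congr rfl fun j₁ _ => by ring
      _ = ∑ d, (∑ i₄', LU u lam' (a, i₀') (d, i₄') * f (lam' - γ • eps n d) i₄' i₂) *
            (∑ j₄', LU' u lam (d, j₀') (b, j₄') * g (lam - γ • eps n b) j₄' j₂) := by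
            refine Finset.sum_congr rfl fun d _ => ?_
            rw [aux_morph_entry u lam' (hf.2 u lam') a d i₀' i₂,
              aux_morph_entry u lam (hg.2 u lam) d b j₀' j₂]
      _ = ∑ d, ∑ i₄', ∑ j₄', LU u lam' (a, i₀') (d, i₄') * f (lam' - γ • eps n d) i₄' i₂ *
            (LU' u lam (d, j₀') (b, j₄') * g (lam - γ • eps n b) j₄' j₂) := by
            refine Finset.sum_congr rfl fun d _ => ?_
            rw [Finset.sum_mul_sum]
      _ = ∑ i₄', ∑ j₄', ∑ d, LU u lam' (a, i₀') (d, i₄') * f (lam' - γ • eps n d) i₄' i₂ *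
            (LU' u lam (d, j₀') (b, j₄') * g (lam - γ • eps n b) j₄' j₂) := by
            exact (sum_comm3 _).symm
      _ = ∑ i₄', ∑ j₄', ∑ d, LU u lam' (a, i₀') (d, i₄') * LU' u lam (d, j₀') (b, j₄') *
            (f (lam - γ • eps n b - γ • wW' j₂) i₄' i₂ * g (lam - γ • eps n b) j₄' j₂) := by
            refine Finset.sum_congr rfl fun i₄' _ => Finset.sum_congr rfl fun j₄' _ =>
              Finset.sum_congr rfl fun d _ => ?_
            by_cases hLz : LU' u lam (d, j₀') (b, j₄') = 0
            · simp [hLz]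
            by_cases hgz : g (lam - γ • eps n b) j₄' j₂ = 0
            · simp [hgz]
            have hw1 := (hLU'.1 u lam) (d, j₀') (b, j₄') hLz
            have hw2 := hg.1 (lam - γ • eps n b) j₄' j₂ hgz
            have hsh : lam' - γ • eps n d = lam - γ • eps n b - γ • wW' j₂ := by
              rw [hw2] at hw1
              rw [hlam', sub_sub, sub_sub, ← smul_add, ← smul_add,
                add_comm (wU' j₀'), hw1]
            rw [hsh]
            ring
      _ = ∑ i₄', ∑ j₄',
            (∑ d, LU u lam' (a, i₀') (d, i₄') * LU' u lam (d, j₀') (b, j₄')) *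
            (f (lam - γ • eps n b - γ • wW' j₂) i₄' i₂ * g (lam - γ • eps n b) j₄' j₂) := by
            refine Finset.sum_congr rfl fun i₄' _ => Finset.sum_congr rfl fun j₄' _ => ?_
            rw [Finset.sum_mul]
end
end

section
/- Let R be a weight-preserving solution of the QDYB equation with spectral parameter and step γ, and let L be an L-operator for R on W = ℂᴺ with weight map w. Let ζ₁, …, ζₙ : ℂⁿ → ℂˣ be arbitrary functions and ξ(λ) = Σ_a ζ_a(λ) E_{a,a} ∈ End(ℂⁿ). Define R̃(u,λ) = (ξ^{(1)}(λ − γh^{(2)}))⁻¹ (ξ^{(2)}(λ))⁻¹ R(u,λ) ξ^{(1)}(λ) ξ^{(2)}(λ − γh^{(1)})) on V ⊗ V, and define L̃(u,λ) = (ξ^{(1)}(λ − γh^{(2)}))⁻¹ L(u,λ) ξ^{(1)}(λ) on V ⊗ W, where now ξ^{(1)}(λ − γh^{(2)}) acts on e_m ⊗ f_k as ζ_m(λ − γw(k)) e_m ⊗ f_k. Then R̃ is a weight-preserving solution of the QDYB equation with step γ, and L̃ is an L-operator for R̃ on W. -/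
noncomputable section

variable {n : ℕ}

/-!
Conjugating by a diagonal dynamical twist multiplies each matrix entry by a scalar depending only
on its row, its column and the dynamical parameter. In a product of three such dynamically
shifted operators the scalars attached to the intermediate basis vectors cancel, because weight
preservation forces the two shifts they are evaluated at to agree. Both sides of the
Yang–Baxter relation are therefore twisted by the same outer scalars, and the relation survives.
-/

open Matrix

def twist {P : Type*} (l r : P → ℂ) (B : Matrix P P ℂ) : Matrix P P ℂ :=
  of fun p q => l p * B p q * r q

@[simp]
lemma twist_apply {P : Type*} (l r : P → ℂ) (B : Matrix P P ℂ) (p q : P) :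
    twist l r B p q = l p * B p q * r q := rfl

lemma IsWeightPres.twist {A B : Type*} {wA : A → Wt n} {wB : B → Wt n}
    {X : Matrix (A × B) (A × B) ℂ} (hX : IsWeightPres wA wB X) (l r : A × B → ℂ) :
    IsWeightPres wA wB (twist l r X) := fun p q h =>
  hX p q fun h0 => h (by simp [h0])

lemma twist_mul_twist_mul_twist {P : Type*} [Fintype P] (l₁ r₁ l₂ r₂ l₃ r₃ φ ψ : P → ℂ)
    (B₁ B₂ B₃ : Matrix P P ℂ)
    (h : ∀ p r s q, B₁ p r ≠ 0 → B₂ r s ≠ 0 → B₃ s q ≠ 0 →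
      l₁ p * r₁ r * l₂ r * r₂ s * l₃ s * r₃ q = φ p * ψ q) :
    twist l₁ r₁ B₁ * twist l₂ r₂ B₂ * twist l₃ r₃ B₃ = twist φ ψ (B₁ * B₂ * B₃) := by
  ext p q
  simp only [mul_apply, twist_apply, Finset.sum_mul, Finset.mul_sum]
  refine Finset.sum_congr rfl fun s _ => Finset.sum_congr rfl fun r _ => ?_
  by_cases h₁ : B₁ p r = 0
  · simp [h₁]
  by_cases h₂ : B₂ r s = 0
  · simp [h₂]
  by_cases h₃ : B₃ s q = 0
  · simp [h₃]
  linear_combination B₁ p r * B₂ r s * B₃ s q * h p r s q h₁ h₂ h₃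

section DynamicalOperators

variable {A B C : Type*}

lemma dop12_twist [DecidableEq C] (l r : Wt n → A × B → ℂ)
    (X : Wt n → Matrix (A × B) (A × B) ℂ) (sh : C → Wt n) (lam : Wt n) :
    dop12 (fun μ => twist (l μ) (r μ) (X μ)) sh lam =
      twist (fun p => l (lam - sh p.2.2) (p.1, p.2.1))
        (fun q => r (lam - sh q.2.2) (q.1, q.2.1)) (dop12 X sh lam) := by
  ext p q
  simp only [dop12, twist_apply]
  split_ifs with h
  · rw [h]
  · ring

lemma dop13_twist [DecidableEq B] (l r : Wt n → A × C → ℂ)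
    (X : Wt n → Matrix (A × C) (A × C) ℂ) (sh : B → Wt n) (lam : Wt n) :
    dop13 (fun μ => twist (l μ) (r μ) (X μ)) sh lam =
      twist (fun p => l (lam - sh p.2.1) (p.1, p.2.2))
        (fun q => r (lam - sh q.2.1) (q.1, q.2.2)) (dop13 X sh lam) := by
  ext p q
  simp only [dop13, twist_apply]
  split_ifs with h
  · rw [h]
  · ring

lemma dop23_twist [DecidableEq A] (l r : Wt n → B × C → ℂ)
    (X : Wt n → Matrix (B × C) (B × C) ℂ) (sh : A → Wt n) (lam : Wt n) :
    dop23 (fun μ => twist (l μ) (r μ) (X μ)) sh lam =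
      twist (fun p => l (lam - sh p.1) (p.2.1, p.2.2))
        (fun q => r (lam - sh q.1) (q.2.1, q.2.2)) (dop23 X sh lam) := by
  ext p q
  simp only [dop23, twist_apply]
  split_ifs with h
  · rw [h]
  · ring

lemma dop12_ne_zero_iff [DecidableEq C] {X : Wt n → Matrix (A × B) (A × B) ℂ}
    {sh : C → Wt n} {lam : Wt n} {p q : A × B × C} :
    dop12 X sh lam p q ≠ 0 ↔
      p.2.2 = q.2.2 ∧ X (lam - sh p.2.2) (p.1, p.2.1) (q.1, q.2.1) ≠ 0 := by
  unfold dop12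
  split_ifs with h <;> simp [h]

lemma dop13_ne_zero_iff [DecidableEq B] {X : Wt n → Matrix (A × C) (A × C) ℂ}
    {sh : B → Wt n} {lam : Wt n} {p q : A × B × C} :
    dop13 X sh lam p q ≠ 0 ↔
      p.2.1 = q.2.1 ∧ X (lam - sh p.2.1) (p.1, p.2.2) (q.1, q.2.2) ≠ 0 := by
  unfold dop13
  split_ifs with h <;> simp [h]

lemma dop23_ne_zero_iff [DecidableEq A] {X : Wt n → Matrix (B × C) (B × C) ℂ}
    {sh : A → Wt n} {lam : Wt n} {p q : A × B × C} :
    dop23 X sh lam p q ≠ 0 ↔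
      p.1 = q.1 ∧ X (lam - sh p.1) (p.2.1, p.2.2) (q.2.1, q.2.2) ≠ 0 := by
  unfold dop23
  split_ifs with h <;> simp [h]

end DynamicalOperators

section Gauge

variable {A B C : Type*} [Fintype A] [Fintype B] [Fintype C]
  [DecidableEq A] [DecidableEq B] [DecidableEq C]

/-- Both `QDYB` and the defining relation of an L-operator are instances of this relation on
`U_A ⊗ U_B ⊗ U_C`. -/
def DynamicalYBRel (γ : ℂ) (wA : A → Wt n) (wB : B → Wt n) (wC : C → Wt n)
    (X₁₂ : Wt n → Matrix (A × B) (A × B) ℂ) (X₁₃ : Wt n → Matrix (A × C) (A × C) ℂ)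
    (X₂₃ : Wt n → Matrix (B × C) (B × C) ℂ) : Prop :=
  ∀ lam : Wt n,
    dop12 X₁₂ (fun c => γ • wC c) lam * dop13 X₁₃ (fun _ : B => (0 : Wt n)) lam *
        dop23 X₂₃ (fun a => γ • wA a) lam =
      dop23 X₂₃ (fun _ : A => (0 : Wt n)) lam * dop13 X₁₃ (fun b => γ • wB b) lam *
        dop12 X₁₂ (fun _ : C => (0 : Wt n)) lam

/-- `(ξ_A^{(1)}(λ − γh^{(2)}))⁻¹ (ξ_B^{(2)}(λ))⁻¹ X(λ) ξ_A^{(1)}(λ) ξ_B^{(2)}(λ − γh^{(1)})`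
for diagonal twists `ξ_A = Σ_a ζ_A a E_{a,a}` and `ξ_B = Σ_b ζ_B b E_{b,b}`. -/
def dynamicalGauge (γ : ℂ) (wA : A → Wt n) (wB : B → Wt n) (ζA : A → Wt n → ℂˣ) (ζB : B → Wt n → ℂˣ)
    (X : Wt n → Matrix (A × B) (A × B) ℂ) : Wt n → Matrix (A × B) (A × B) ℂ := fun μ =>
  twist (fun p => (((ζA p.1 (μ - γ • wB p.2))⁻¹ * (ζB p.2 μ)⁻¹ : ℂˣ) : ℂ))
    (fun q => ((ζA q.1 μ * ζB q.2 (μ - γ • wA q.1) : ℂˣ) : ℂ)) (X μ)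

lemma dynamicalGauge_eq_diagonal_mul (γ : ℂ) (wA : A → Wt n) (wB : B → Wt n) (ζA : A → Wt n → ℂˣ)
    (ζB : B → Wt n → ℂˣ) (X : Wt n → Matrix (A × B) (A × B) ℂ) (μ : Wt n) :
    dynamicalGauge γ wA wB ζA ζB X μ =
      diagonal (fun p : A × B => (((ζA p.1 (μ - γ • wB p.2))⁻¹ : ℂˣ) : ℂ)) *
        diagonal (fun p : A × B => (((ζB p.2 μ)⁻¹ : ℂˣ) : ℂ)) * X μ *
        diagonal (fun p : A × B => (ζA p.1 μ : ℂ)) *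
        diagonal (fun p : A × B => (ζB p.2 (μ - γ • wA p.1) : ℂ)) := by
  ext p q
  simp only [dynamicalGauge, twist_apply, mul_diagonal, diagonal_mul_diagonal, diagonal_mul,
    Units.val_mul]
  ring

lemma dynamicalGauge_one_eq_diagonal_mul (γ : ℂ) (wA : A → Wt n) (wB : B → Wt n)
    (ζA : A → Wt n → ℂˣ) (X : Wt n → Matrix (A × B) (A × B) ℂ) (μ : Wt n) :
    dynamicalGauge γ wA wB ζA 1 X μ =
      diagonal (fun p : A × B => (((ζA p.1 (μ - γ • wB p.2))⁻¹ : ℂˣ) : ℂ)) * X μ *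
        diagonal (fun p : A × B => (ζA p.1 μ : ℂ)) := by
  ext p q
  simp [dynamicalGauge, mul_diagonal, diagonal_mul]

theorem DynamicalYBRel.dynamicalGauge {γ : ℂ} {wA : A → Wt n} {wB : B → Wt n} {wC : C → Wt n}
    {X₁₂ : Wt n → Matrix (A × B) (A × B) ℂ} {X₁₃ : Wt n → Matrix (A × C) (A × C) ℂ}
    {X₂₃ : Wt n → Matrix (B × C) (B × C) ℂ}
    (hw₁₂ : ∀ lam, IsWeightPres wA wB (X₁₂ lam)) (hw₁₃ : ∀ lam, IsWeightPres wA wC (X₁₃ lam))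
    (hw₂₃ : ∀ lam, IsWeightPres wB wC (X₂₃ lam)) (h : DynamicalYBRel γ wA wB wC X₁₂ X₁₃ X₂₃)
    (ζA : A → Wt n → ℂˣ) (ζB : B → Wt n → ℂˣ) (ζC : C → Wt n → ℂˣ) :
    DynamicalYBRel γ wA wB wC (dynamicalGauge γ wA wB ζA ζB X₁₂) (dynamicalGauge γ wA wC ζA ζC X₁₃)
      (dynamicalGauge γ wB wC ζB ζC X₂₃) := by
  intro lam
  let φ : A × B × C → ℂ := fun p =>
    (((ζA p.1 (lam - γ • wB p.2.1 - γ • wC p.2.2))⁻¹ * (ζB p.2.1 (lam - γ • wC p.2.2))⁻¹ *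
      (ζC p.2.2 lam)⁻¹ : ℂˣ) : ℂ)
  let ψ : A × B × C → ℂ := fun q =>
    ((ζA q.1 lam * ζB q.2.1 (lam - γ • wA q.1) *
      ζC q.2.2 (lam - γ • wA q.1 - γ • wB q.2.1) : ℂˣ) : ℂ)
  have shift_eq {x y x' y' : Wt n} (hxy : x + y = x' + y') :
      lam - γ • x - γ • y = lam - γ • x' - γ • y' := by
    rw [sub_sub, sub_sub, ← smul_add, ← smul_add, hxy]
  unfold _root_.dynamicalGauge
  simp only [dop12_twist, dop13_twist, dop23_twist]
  rw [twist_mul_twist_mul_twist _ _ _ _ _ _ φ ψ, h lam, twist_mul_twist_mul_twist _ _ _ _ _ _ φ ψ]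
  · rintro ⟨a₁, b₁, c₁⟩ ⟨a₂, b₂, c₂⟩ ⟨a₃, b₃, c₃⟩ ⟨a₄, b₄, c₄⟩ h₁ h₂ h₃
    obtain ⟨rfl, hX₂₃⟩ := dop23_ne_zero_iff.1 h₁
    obtain ⟨rfl, hX₁₃⟩ := dop13_ne_zero_iff.1 h₂
    obtain ⟨rfl, hX₁₂⟩ := dop12_ne_zero_iff.1 h₃
    have hC := shift_eq (hw₂₃ _ _ _ hX₂₃).symm
    have hB := shift_eq ((add_comm _ _).trans (hw₁₂ _ _ _ hX₁₂))
    simp only [sub_zero, Units.val_mul, Units.val_inv_eq_inv_val, φ, ψ] at hC hB ⊢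
    rw [hC, hB]
    field_simp
  · rintro ⟨a₁, b₁, c₁⟩ ⟨a₂, b₂, c₂⟩ ⟨a₃, b₃, c₃⟩ ⟨a₄, b₄, c₄⟩ h₁ h₂ h₃
    obtain ⟨rfl, hX₁₂⟩ := dop12_ne_zero_iff.1 h₁
    obtain ⟨rfl, hX₁₃⟩ := dop13_ne_zero_iff.1 h₂
    obtain ⟨rfl, hX₂₃⟩ := dop23_ne_zero_iff.1 h₃
    have hA := shift_eq ((add_comm _ _).trans (hw₁₃ _ _ _ hX₁₃))
    simp only [sub_zero, Units.val_mul, Units.val_inv_eq_inv_val, φ, ψ] at hA ⊢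
    rw [hA, sub_right_comm lam (γ • wC c₁)]
    field_simp

end Gauge

theorem qdyb_dynamicalGauge {γ : ℂ} {R : ℂ → Wt n → Matrix (Fin n × Fin n) (Fin n × Fin n) ℂ}
    (hwt : ∀ u lam, IsWeightPres (eps n) (eps n) (R u lam)) (hR : QDYB n γ R)
    (ζ : Fin n → Wt n → ℂˣ) :
    QDYB n γ fun u => dynamicalGauge γ (eps n) (eps n) ζ ζ (R u) := fun u₁ u₂ u₃ =>
  DynamicalYBRel.dynamicalGauge (hwt _) (hwt _) (hwt _) (hR u₁ u₂ u₃) ζ ζ ζ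

theorem isLOperator_dynamicalGauge {K : Type*} [Fintype K] [DecidableEq K] {γ : ℂ}
    {R : ℂ → Wt n → Matrix (Fin n × Fin n) (Fin n × Fin n) ℂ} {w : K → Wt n}
    {L : ℂ → Wt n → Matrix (Fin n × K) (Fin n × K) ℂ}
    (hwt : ∀ u lam, IsWeightPres (eps n) (eps n) (R u lam)) (hL : IsLOperator n γ R w L)
    (ζ : Fin n → Wt n → ℂˣ) :
    IsLOperator n γ (fun u => dynamicalGauge γ (eps n) (eps n) ζ ζ (R u)) w
      (fun u => dynamicalGauge γ (eps n) w ζ 1 (L u)) :=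
  ⟨fun u lam => (hL.1 u lam).twist _ _, fun u₁ u₂ u₃ =>
    DynamicalYBRel.dynamicalGauge (hwt _) (hL.1 _) (hL.1 _) (hL.2 u₁ u₂ u₃) ζ ζ 1⟩

theorem diagonal_twist_rmatrix_and_lop_general (n N : ℕ) (γ : ℂ)
    (R : ℂ → Wt n → Matrix (Fin n × Fin n) (Fin n × Fin n) ℂ)
    (hwt : ∀ u lam, IsWeightPres (eps n) (eps n) (R u lam))
    (hR : QDYB n γ R)
    (w : Fin N → Wt n)
    (L : ℂ → Wt n → Matrix (Fin n × Fin N) (Fin n × Fin N) ℂ)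
    (hL : IsLOperator n γ R w L)
    (ζ : Fin n → Wt n → ℂˣ) :
    (∀ u lam, IsWeightPres (eps n) (eps n)
      ((fun u lam =>
        Matrix.diagonal (fun p : Fin n × Fin n =>
            (((ζ p.1 (lam - γ • eps n p.2))⁻¹ : ℂˣ) : ℂ)) *
          Matrix.diagonal (fun p : Fin n × Fin n => (((ζ p.2 lam)⁻¹ : ℂˣ) : ℂ)) *
          R u lam *
          Matrix.diagonal (fun p : Fin n × Fin n => (ζ p.1 lam : ℂ)) *
          Matrix.diagonal (fun p : Fin n × Fin n =>
            (ζ p.2 (lam - γ • eps n p.1) : ℂ))) u lam)) ∧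
    QDYB n γ (fun u lam =>
        Matrix.diagonal (fun p : Fin n × Fin n =>
            (((ζ p.1 (lam - γ • eps n p.2))⁻¹ : ℂˣ) : ℂ)) *
          Matrix.diagonal (fun p : Fin n × Fin n => (((ζ p.2 lam)⁻¹ : ℂˣ) : ℂ)) *
          R u lam *
          Matrix.diagonal (fun p : Fin n × Fin n => (ζ p.1 lam : ℂ)) *
          Matrix.diagonal (fun p : Fin n × Fin n =>
            (ζ p.2 (lam - γ • eps n p.1) : ℂ))) ∧
    IsLOperator n γ
      (fun u lam =>
        Matrix.diagonal (fun p : Fin n × Fin n =>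
            (((ζ p.1 (lam - γ • eps n p.2))⁻¹ : ℂˣ) : ℂ)) *
          Matrix.diagonal (fun p : Fin n × Fin n => (((ζ p.2 lam)⁻¹ : ℂˣ) : ℂ)) *
          R u lam *
          Matrix.diagonal (fun p : Fin n × Fin n => (ζ p.1 lam : ℂ)) *
          Matrix.diagonal (fun p : Fin n × Fin n =>
            (ζ p.2 (lam - γ • eps n p.1) : ℂ)))
      w
      (fun u lam =>
        Matrix.diagonal (fun p : Fin n × Fin N =>
            (((ζ p.1 (lam - γ • w p.2))⁻¹ : ℂˣ) : ℂ)) *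
          L u lam *
          Matrix.diagonal (fun p : Fin n × Fin N => (ζ p.1 lam : ℂ))) := by
  simp only [← dynamicalGauge_eq_diagonal_mul, ← dynamicalGauge_one_eq_diagonal_mul γ (eps n)]
  exact ⟨fun u lam => (hwt u lam).twist _ _, qdyb_dynamicalGauge hwt hR ζ,
    isLOperator_dynamicalGauge hwt hL ζ⟩

/-- gauge transformation of an R-matrix and of an L-operator
by a diagonal dynamical twist `ξ(λ) = Σ_a ζ_a(λ) E_{a,a}`.  If `R` is a
weight-preserving solution of the QDYB equation with step `γ` and `L` is an
L-operator for `R` on `W = ℂᴺ` with weight map `w`, then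
`R̃(u,λ) = (ξ^{(1)}(λ−γh^{(2)}))⁻¹ (ξ^{(2)}(λ))⁻¹ R(u,λ) ξ^{(1)}(λ) ξ^{(2)}(λ−γh^{(1)})`
is again a weight-preserving solution of the QDYB equation with step `γ`, and
`L̃(u,λ) = (ξ^{(1)}(λ−γh^{(2)}))⁻¹ L(u,λ) ξ^{(1)}(λ)` is an L-operator for `R̃`
on `W`. -/
theorem diagonal_twist_rmatrix_and_lop (n N : ℕ) (hn : 1 ≤ n) (hN : 1 ≤ N) (γ : ℂ)
    (R : ℂ → Wt n → Matrix (Fin n × Fin n) (Fin n × Fin n) ℂ)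
    (hwt : ∀ u lam, IsWeightPres (eps n) (eps n) (R u lam))
    (hR : QDYB n γ R)
    (w : Fin N → Wt n)
    (L : ℂ → Wt n → Matrix (Fin n × Fin N) (Fin n × Fin N) ℂ)
    (hL : IsLOperator n γ R w L)
    (ζ : Fin n → Wt n → ℂˣ) :
    (∀ u lam, IsWeightPres (eps n) (eps n)
      ((fun u lam =>
        Matrix.diagonal (fun p : Fin n × Fin n =>
            (((ζ p.1 (lam - γ • eps n p.2))⁻¹ : ℂˣ) : ℂ)) *
          Matrix.diagonal (fun p : Fin n × Fin n => (((ζ p.2 lam)⁻¹ : ℂˣ) : ℂ)) *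
          R u lam *
          Matrix.diagonal (fun p : Fin n × Fin n => (ζ p.1 lam : ℂ)) *
          Matrix.diagonal (fun p : Fin n × Fin n =>
            (ζ p.2 (lam - γ • eps n p.1) : ℂ))) u lam)) ∧
    QDYB n γ (fun u lam =>
        Matrix.diagonal (fun p : Fin n × Fin n =>
            (((ζ p.1 (lam - γ • eps n p.2))⁻¹ : ℂˣ) : ℂ)) *
          Matrix.diagonal (fun p : Fin n × Fin n => (((ζ p.2 lam)⁻¹ : ℂˣ) : ℂ)) *
          R u lam *
          Matrix.diagonal (fun p : Fin n × Fin n => (ζ p.1 lam : ℂ)) *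
          Matrix.diagonal (fun p : Fin n × Fin n =>
            (ζ p.2 (lam - γ • eps n p.1) : ℂ))) ∧
    IsLOperator n γ
      (fun u lam =>
        Matrix.diagonal (fun p : Fin n × Fin n =>
            (((ζ p.1 (lam - γ • eps n p.2))⁻¹ : ℂˣ) : ℂ)) *
          Matrix.diagonal (fun p : Fin n × Fin n => (((ζ p.2 lam)⁻¹ : ℂˣ) : ℂ)) *
          R u lam *
          Matrix.diagonal (fun p : Fin n × Fin n => (ζ p.1 lam : ℂ)) *
          Matrix.diagonal (fun p : Fin n × Fin n =>
            (ζ p.2 (lam - γ • eps n p.1) : ℂ)))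
      w
      (fun u lam =>
        Matrix.diagonal (fun p : Fin n × Fin N =>
            (((ζ p.1 (lam - γ • w p.2))⁻¹ : ℂˣ) : ℂ)) *
          L u lam *
          Matrix.diagonal (fun p : Fin n × Fin N => (ζ p.1 lam : ℂ))) :=
  diagonal_twist_rmatrix_and_lop_general n N γ R hwt hR w L hL ζ
end
end
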